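/- arXiv:1806.00010 — 5 statements merged into one kernel-verified Lean document; each statement's English description precedes it below -/
import Mathlib

section
/- Let k be a field and A a k-linear abelian category whose Hom-spaces are finite-dimensional over k. Let S be a simple object of A which is rigid, i.e. every short exact sequence 0 → S → E → S → 0 splits. Then A admits a torsion pair whose torsion-free part is generated by S; concretely, for every object X of A there exist an object T, a natural number m, and a short exact sequence 0 → T → X → S^{⊕m} → 0 such that Hom(T, S) = 0. -/
open CategoryTheory CategoryTheory.Limits
attribute [local instance] CategoryTheory.Abelian.hasFiniteBiproducts

section Aux

open CategoryTheory.Abelian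

variable {A : Type*} [Category A] [Abelian A]

/-- Extension lemma: given a short exact sequence `0 → K → X → S → 0` with `S` rigid,
every map `K ⟶ S` extends to `X`. -/
lemma aux_extend (S : A)
    (hrigid : ∀ (E : A) (f : S ⟶ E) (g : E ⟶ S) (w : f ≫ g = 0),
      (ShortComplex.mk f g w).ShortExact → ∃ r : E ⟶ S, f ≫ r = 𝟙 S)
    {K X : A} (i : K ⟶ X) (p : X ⟶ S) (w : i ≫ p = 0)
    (hse : (ShortComplex.mk i p w).ShortExact) (ψ : K ⟶ S) :
    ∃ ψ' : X ⟶ S, i ≫ ψ' = ψ := by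
  haveI : Mono i := hse.mono_f
  haveI : Epi p := hse.epi_g
  have hcond : ψ ≫ pushout.inl ψ i = i ≫ pushout.inr ψ i := pushout.condition
  have hw : ψ ≫ (0 : S ⟶ S) = i ≫ p := by rw [comp_zero, w]
  have hinl : pushout.inl ψ i ≫ pushout.desc 0 p hw = 0 := pushout.inl_desc _ _ _
  have hinr : pushout.inr ψ i ≫ pushout.desc 0 p hw = p := pushout.inr_desc _ _ _
  haveI : Epi (pushout.desc 0 p hw) := epi_of_epi_fac hinr
  have hcolim : IsColimit (CokernelCofork.ofπ (pushout.desc 0 p hw) hinl) := by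
    refine CokernelCofork.IsColimit.ofπ' _ hinl (fun {W} e he => ?_)
    have h1 : i ≫ pushout.inr ψ i ≫ e = 0 := by
      rw [← Category.assoc, ← hcond, Category.assoc, he, comp_zero]
    refine ⟨hse.exact.desc (pushout.inr ψ i ≫ e) h1, ?_⟩
    apply pushout.hom_ext
    · rw [← Category.assoc, hinl, zero_comp, he]
    · rw [← Category.assoc, hinr]
      exact hse.exact.g_desc _ h1
  have hSE : (ShortComplex.mk (pushout.inl ψ i) (pushout.desc 0 p hw) hinl).ShortExact :=
    ShortComplex.ShortExact.mk' (ShortComplex.exact_of_g_is_cokernel _ hcolim)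
      inferInstance inferInstance
  obtain ⟨r, hr⟩ := hrigid _ _ _ hinl hSE
  exact ⟨pushout.inr ψ i ≫ r,
    by rw [← Category.assoc, ← hcond, Category.assoc, hr, Category.comp_id]⟩

/-- The trivial case: if `Hom(X,S) = 0`, then `0 → X → X → S^{⊕0} → 0` works. -/
lemma aux_trivial (S X : A) (h0 : ∀ φ : X ⟶ S, φ = 0) :
    ∃ (T : A) (m : ℕ) (f : T ⟶ X) (g : X ⟶ ⨁ (fun _ : Fin m => S))
      (w : f ≫ g = 0),
      (ShortComplex.mk f g w).ShortExact ∧ ∀ φ : T ⟶ S, φ = 0 := by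
  have hZ : IsZero (⨁ (fun _ : Fin 0 => S)) := by
    rw [IsZero.iff_id_eq_zero]
    apply biproduct.hom_ext
    intro j
    exact j.elim0
  have w : 𝟙 X ≫ (0 : X ⟶ ⨁ (fun _ : Fin 0 => S)) = 0 := by simp
  haveI hepi : Epi (0 : X ⟶ ⨁ (fun _ : Fin 0 => S)) :=
    ⟨fun u v _ => hZ.eq_of_src u v⟩
  have hcolim : IsColimit (CokernelCofork.ofπ _ (ShortComplex.mk (𝟙 X) _ w).zero) :=
    CokernelCofork.IsColimit.ofπ _ _ (fun g' _ => 0)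
      (fun g' hg' => by rw [zero_comp]; rw [Category.id_comp] at hg'; exact hg'.symm)
      (fun g' hg' m hm => hZ.eq_of_src m 0)
  exact ⟨X, 0, 𝟙 X, 0, w,
    ShortComplex.ShortExact.mk' (ShortComplex.exact_of_g_is_cokernel _ hcolim)
      inferInstance hepi, h0⟩

open scoped Pseudoelement in
/-- Third-isomorphism style lemma: given `0 → T → K → B → 0` and `0 → K → X → S' → 0`,
the quotient `X/T` fits in `0 → B → X/T → S' → 0`. -/
lemma aux_third {T K X B S' : A} (f : T ⟶ K) (g : K ⟶ B) (wfg : f ≫ g = 0)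
    (hse2 : (ShortComplex.mk f g wfg).ShortExact)
    (i : K ⟶ X) (p : X ⟶ S') (wip : i ≫ p = 0)
    (hse1 : (ShortComplex.mk i p wip).ShortExact) :
    ∃ (jm : B ⟶ cokernel (f ≫ i)) (c' : cokernel (f ≫ i) ⟶ S') (wj : jm ≫ c' = 0),
      (ShortComplex.mk jm c' wj).ShortExact ∧ cokernel.π (f ≫ i) ≫ c' = p := by
  haveI : Mono f := hse2.mono_f
  haveI : Epi g := hse2.epi_g
  haveI : Mono i := hse1.mono_f
  haveI : Epi p := hse1.epi_g
  haveI : Epi (ShortComplex.mk f g wfg).g := hse2.epi_g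
  have hfi0 : f ≫ i ≫ cokernel.π (f ≫ i) = 0 := by
    rw [← Category.assoc, cokernel.condition]
  have hfp : (f ≫ i) ≫ p = 0 := by rw [Category.assoc, wip, comp_zero]
  set jm : B ⟶ cokernel (f ≫ i) := hse2.exact.desc (i ≫ cokernel.π (f ≫ i)) hfi0 with hjm
  set c' : cokernel (f ≫ i) ⟶ S' := cokernel.desc (f ≫ i) p hfp with hc'
  have hgj : g ≫ jm = i ≫ cokernel.π (f ≫ i) := hse2.exact.g_desc _ hfi0
  have hcc' : cokernel.π (f ≫ i) ≫ c' = p := cokernel.π_desc _ _ _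
  have wj : jm ≫ c' = 0 := by
    rw [← cancel_epi g, comp_zero, ← Category.assoc, hgj, Category.assoc, hcc', wip]
  have hse3 : (ShortComplex.mk (f ≫ i) (cokernel.π (f ≫ i))
      (cokernel.condition _)).ShortExact :=
    ShortComplex.ShortExact.mk'
      (ShortComplex.exact_of_g_is_cokernel _ (cokernelIsCokernel _))
      inferInstance inferInstance
  haveI hmj : Mono jm := by
    apply Pseudoelement.mono_of_zero_of_map_zero
    intro x hx
    obtain ⟨y, rfl⟩ := Pseudoelement.pseudo_surjective_of_epi g x
    have h2 : cokernel.π (f ≫ i) (i y) = 0 := by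
      rw [← Pseudoelement.comp_apply, ← hgj, Pseudoelement.comp_apply, hx]
    obtain ⟨t, ht⟩ := Pseudoelement.pseudo_exact_of_exact hse3.exact _ h2
    rw [Pseudoelement.comp_apply] at ht
    have h3 : f t = y := Pseudoelement.pseudo_injective_of_mono i ht
    rw [← h3, ← Pseudoelement.comp_apply, wfg]
    exact Pseudoelement.zero_apply _ t
  have hexQ : (ShortComplex.mk jm c' wj).Exact := by
    apply Pseudoelement.exact_of_pseudo_exact
    intro q hq
    obtain ⟨x, rfl⟩ := Pseudoelement.pseudo_surjective_of_epi (cokernel.π (f ≫ i)) q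
    have h4 : p x = 0 := by
      rw [← hcc', Pseudoelement.comp_apply]
      exact hq
    obtain ⟨y, hy⟩ := Pseudoelement.pseudo_exact_of_exact hse1.exact _ h4
    refine ⟨g y, ?_⟩
    rw [← Pseudoelement.comp_apply, hgj, Pseudoelement.comp_apply, hy]
  haveI hec' : Epi c' := epi_of_epi_fac hcc'
  exact ⟨jm, c', wj, ShortComplex.ShortExact.mk' hexQ hmj hec', hcc'⟩

/-- A short exact sequence `0 → S^{⊕m} → Q → S → 0` with `S` rigid splits, giving
`Q ≅ S^{⊕(m+1)}`. -/
lemma aux_iso (S : A)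
    (hrigid : ∀ (E : A) (f : S ⟶ E) (g : E ⟶ S) (w : f ≫ g = 0),
      (ShortComplex.mk f g w).ShortExact → ∃ r : E ⟶ S, f ≫ r = 𝟙 S)
    {Q : A} (m : ℕ) (j : (⨁ (fun _ : Fin m => S)) ⟶ Q) (c' : Q ⟶ S) (wj : j ≫ c' = 0)
    (hseQ : (ShortComplex.mk j c' wj).ShortExact) :
    ∃ e : Q ⟶ ⨁ (fun _ : Fin (m + 1) => S), IsIso e := by
  choose rl hrl using fun l =>
    aux_extend S hrigid j c' wj hseQ (biproduct.π (fun _ : Fin m => S) l)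
  have hjR : j ≫ biproduct.lift rl = 𝟙 _ := by
    apply biproduct.hom_ext
    intro l
    rw [Category.assoc, biproduct.lift_π, hrl, Category.id_comp]
  have spl := ShortComplex.Splitting.ofExactOfRetraction _ hseQ.exact
    (biproduct.lift rl) hjR hseQ.epi_g
  have h1 : j ≫ spl.r = 𝟙 _ := spl.f_r
  have h2 : spl.s ≫ c' = 𝟙 _ := spl.s_g
  have h3 : spl.s ≫ spl.r = 0 := spl.s_r
  have hid : spl.r ≫ j + c' ≫ spl.s = 𝟙 Q := spl.id
  refine ⟨biproduct.lift
      (fun l => Fin.cases c' (fun l' => spl.r ≫ biproduct.π (fun _ : Fin m => S) l') l),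
    ⟨biproduct.desc
      (fun l => Fin.cases spl.s (fun l' => biproduct.ι (fun _ : Fin m => S) l' ≫ j) l),
      ?_, ?_⟩⟩
  · rw [biproduct.lift_desc, Fin.sum_univ_succ]
    simp only [Fin.cases_zero, Fin.cases_succ]
    have htot : ∑ l : Fin m, (spl.r ≫ biproduct.π (fun _ : Fin m => S) l) ≫
        (biproduct.ι (fun _ : Fin m => S) l ≫ j) = spl.r ≫ j := by
      simp only [Category.assoc]
      rw [← Preadditive.comp_sum]
      congr 1
      simp only [← Category.assoc]
      rw [← Preadditive.sum_comp, biproduct.total, Category.id_comp]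
    rw [htot, add_comm]
    exact hid
  · apply biproduct.hom_ext'
    intro l
    apply biproduct.hom_ext
    intro l'
    simp only [biproduct.ι_desc_assoc, Category.assoc, biproduct.lift_π, Category.id_comp,
      Category.comp_id]
    induction l using Fin.cases with
    | zero =>
      induction l' using Fin.cases with
      | zero =>
        rw [Fin.cases_zero, Fin.cases_zero, h2, biproduct.ι_π_self]
      | succ l' =>
        rw [Fin.cases_zero, Fin.cases_succ, ← Category.assoc, h3, zero_comp,
          biproduct.ι_π_ne _ (Fin.succ_ne_zero l').symm]
    | succ l =>
      induction l' using Fin.cases with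
      | zero =>
        rw [Fin.cases_succ, Fin.cases_zero, Category.assoc, wj, comp_zero,
          biproduct.ι_π_ne _ (Fin.succ_ne_zero l)]
      | succ l' =>
        rw [Fin.cases_succ, Fin.cases_succ, Category.assoc, ← Category.assoc j, h1,
          Category.id_comp]
        by_cases h : l = l'
        · subst h
          rw [biproduct.ι_π_self, biproduct.ι_π_self]
        · rw [biproduct.ι_π_ne _ h, biproduct.ι_π_ne _ (fun hh => h (Fin.succ_inj.mp hh))]

end Aux

/-- For a rigid simple object `S` in a Hom-finite `k`-linear abelian category,
there is a torsion pair whose torsion-free part is generated by `S`: every object `X`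
fits in a short exact sequence `0 → T → X → S^{⊕m} → 0` with `Hom(T, S) = 0`. -/
theorem statement_0 (k : Type*) [Field k] (A : Type*) [Category A] [Abelian A]
    [Linear k A] [∀ X Y : A, FiniteDimensional k (X ⟶ Y)]
    (S : A) (hS : Simple S)
    (hrigid : ∀ (E : A) (f : S ⟶ E) (g : E ⟶ S) (w : f ≫ g = 0),
      (ShortComplex.mk f g w).ShortExact → ∃ r : E ⟶ S, f ≫ r = 𝟙 S) :
    ∀ X : A, ∃ (T : A) (m : ℕ) (f : T ⟶ X) (g : X ⟶ ⨁ (fun _ : Fin m => S))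
      (w : f ≫ g = 0),
      (ShortComplex.mk f g w).ShortExact ∧ ∀ φ : T ⟶ S, φ = 0 := by
  haveI := hS
  have key : ∀ (n : ℕ) (X : A), Module.finrank k (X ⟶ S) ≤ n →
      ∃ (T : A) (m : ℕ) (f : T ⟶ X) (g : X ⟶ ⨁ (fun _ : Fin m => S))
        (w : f ≫ g = 0),
        (ShortComplex.mk f g w).ShortExact ∧ ∀ φ : T ⟶ S, φ = 0 := by
    intro n
    induction n with
    | zero =>
      intro X hX
      refine aux_trivial S X (fun φ => ?_)
      have : Subsingleton (X ⟶ S) := by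
        rw [← Module.finrank_zero_iff (R := k)]
        omega
      exact Subsingleton.elim _ _
    | succ n ih =>
      intro X hX
      by_cases hzero : ∀ φ : X ⟶ S, φ = 0
      · exact aux_trivial S X hzero
      · push_neg at hzero
        obtain ⟨φ, hφ⟩ := hzero
        haveI : Epi φ := epi_of_nonzero_to_simple hφ
        have w1 : kernel.ι φ ≫ φ = 0 := kernel.condition φ
        have hse1 : (ShortComplex.mk (kernel.ι φ) φ w1).ShortExact :=
          ShortComplex.ShortExact.mk'
            (ShortComplex.exact_of_f_is_kernel _ (kernelIsKernel φ))
            inferInstance inferInstance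
        -- dimension drop
        have hsurj : Function.Surjective (Linear.leftComp (R := k) S (kernel.ι φ)) := by
          intro ψ
          obtain ⟨ψ', hψ'⟩ := aux_extend S hrigid (kernel.ι φ) φ w1 hse1 ψ
          exact ⟨ψ', hψ'⟩
        have e1 := LinearMap.finrank_range_add_finrank_ker
          (Linear.leftComp (R := k) S (kernel.ι φ))
        rw [LinearMap.range_eq_top.2 hsurj, finrank_top] at e1
        have hmem : φ ∈ LinearMap.ker (Linear.leftComp (R := k) S (kernel.ι φ)) := by
          rw [LinearMap.mem_ker]
          exact w1
        have hker : 0 < Module.finrank k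
            (LinearMap.ker (Linear.leftComp (R := k) S (kernel.ι φ))) :=
          Module.finrank_pos_iff.mpr (nontrivial_of_ne ⟨φ, hmem⟩ 0
            (fun hh => hφ (by simpa using congrArg Subtype.val hh)))
        have hle : Module.finrank k ((kernel φ : A) ⟶ S) ≤ n := by omega
        obtain ⟨T, m, f, g, w2, hse2, hT⟩ := ih (kernel φ) hle
        haveI : Mono f := hse2.mono_f
        obtain ⟨jm, c', wjj, hseQ, hcc'⟩ :=
          aux_third f g w2 hse2 (kernel.ι φ) φ w1 hse1
        obtain ⟨e, he⟩ := aux_iso S hrigid m jm c' wjj hseQ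
        haveI := he
        have wfin : (f ≫ kernel.ι φ) ≫ cokernel.π (f ≫ kernel.ι φ) ≫ e = 0 := by
          rw [← Category.assoc, cokernel.condition, zero_comp]
        refine ⟨T, m + 1, f ≫ kernel.ι φ, cokernel.π (f ≫ kernel.ι φ) ≫ e, wfin, ?_, hT⟩
        have hse4 : (ShortComplex.mk (f ≫ kernel.ι φ) (cokernel.π (f ≫ kernel.ι φ))
            (cokernel.condition _)).ShortExact :=
          ShortComplex.ShortExact.mk'
            (ShortComplex.exact_of_g_is_cokernel _ (cokernelIsCokernel _))
            inferInstance inferInstance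
        refine ShortComplex.shortExact_of_iso ?_ hse4
        exact ShortComplex.isoMk (Iso.refl _) (Iso.refl _) (asIso e) (by simp) (by simp)
  intro X
  exact key _ X le_rfl
end

section
/- Let k be a field and A a k-linear abelian category whose Hom-spaces are finite-dimensional over k. Let S be a simple object of A which is rigid, i.e. every short exact sequence 0 → S → E → S → 0 splits. Then A admits a torsion pair whose torsion part is generated by S; concretely, for every object X of A there exist an object F, a natural number m, and a short exact sequence 0 → S^{⊕m} → X → F → 0 such that Hom(S, F) = 0. -/
open CategoryTheory CategoryTheory.Limits
attribute [local instance] CategoryTheory.Abelian.hasFiniteBiproducts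

section Aux

variable {A : Type*} [Category A] [Abelian A]

/-- Lifting lemma: if `0 → S → X → C → 0` is a short exact sequence with `S` rigid
(in the sense below), then every map `S ⟶ C` lifts to `S ⟶ X`. -/
lemma aux_lift {S X C : A}
    (hrigid : ∀ (E : A) (f : S ⟶ E) (g : E ⟶ S) (w : f ≫ g = 0),
      (ShortComplex.mk f g w).ShortExact → ∃ r : E ⟶ S, f ≫ r = 𝟙 S)
    {φ : S ⟶ X} {π : X ⟶ C} {w : φ ≫ π = 0}
    (hse : (ShortComplex.mk φ π w).ShortExact) (ψ : S ⟶ C) :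
    ∃ χ : S ⟶ X, χ ≫ π = ψ := by
  have hepi : Epi π := hse.epi_g
  have hmono : Mono φ := hse.mono_f
  have hsnd : Epi (pullback.snd π ψ) := Abelian.epi_pullback_of_epi_f π ψ
  have hw : φ ≫ π = 0 ≫ ψ := by simpa using w
  set a : S ⟶ pullback π ψ := pullback.lift φ 0 hw with ha
  have w' : a ≫ pullback.snd π ψ = 0 := pullback.lift_snd _ _ _
  have hafst : a ≫ pullback.fst π ψ = φ := pullback.lift_fst _ _ _
  have hamono : Mono a := mono_of_mono_fac hafst
  have hex : (ShortComplex.mk a (pullback.snd π ψ) w').Exact := by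
    rw [ShortComplex.exact_iff_exact_up_to_refinements]
    intro T x hx
    dsimp at hx ⊢
    have h1 : (x ≫ pullback.fst π ψ) ≫ π = 0 := by
      rw [Category.assoc, pullback.condition, ← Category.assoc, hx, zero_comp]
    obtain ⟨T', ρ, hρ, s, fac⟩ := hse.exact.exact_up_to_refinements (x ≫ pullback.fst π ψ) h1
    dsimp at fac
    refine ⟨T', ρ, hρ, s, ?_⟩
    apply pullback.hom_ext
    · rw [Category.assoc, Category.assoc, hafst, ← Category.assoc]
      simpa using fac
    · rw [Category.assoc, Category.assoc, hx, w', comp_zero, comp_zero]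
  have hse2 : (ShortComplex.mk a (pullback.snd π ψ) w').ShortExact :=
    ShortComplex.ShortExact.mk' hex hamono hsnd
  obtain ⟨r, hr⟩ := hrigid _ a (pullback.snd π ψ) w' hse2
  let sp := ShortComplex.Splitting.ofExactOfRetraction _ hex r hr hsnd
  refine ⟨sp.s ≫ pullback.fst π ψ, ?_⟩
  have hs : sp.s ≫ pullback.snd π ψ = 𝟙 S := sp.s_g
  rw [Category.assoc, pullback.condition, ← Category.assoc, hs, Category.id_comp]

/-- The base case: if there is no nonzero map `S ⟶ X`, the trivial sequence works. -/
lemma aux_base {S X : A} (h : ∀ φ : S ⟶ X, φ = 0) :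
    ∃ (F : A) (m : ℕ) (f : ⨁ (fun _ : Fin m => S) ⟶ X) (g : X ⟶ F)
      (w : f ≫ g = 0),
      (ShortComplex.mk f g w).ShortExact ∧ ∀ φ : S ⟶ F, φ = 0 := by
  refine ⟨X, 0, 0, 𝟙 X, zero_comp, ?_, h⟩
  have hmono : Mono (0 : (⨁ fun _ : Fin 0 => S) ⟶ X) := by
    rw [Preadditive.mono_iff_cancel_zero]
    intro P g' _
    exact biproduct.hom_ext _ _ (fun j => Fin.elim0 j)
  exact ShortComplex.ShortExact.mk'
    ((ShortComplex.exact_iff_mono _ rfl).2 (by dsimp; infer_instance)) hmono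
    (by dsimp; infer_instance)

end Aux

/-- For a rigid simple object `S` in a Hom-finite `k`-linear abelian category,
there is a torsion pair whose torsion part is generated by `S`: every object `X`
fits in a short exact sequence `0 → S^{⊕m} → X → F → 0` with `Hom(S, F) = 0`. -/
theorem statement_1 (k : Type*) [Field k] (A : Type*) [Category A] [Abelian A]
    [Linear k A] [∀ X Y : A, FiniteDimensional k (X ⟶ Y)]
    (S : A) (hS : Simple S)
    (hrigid : ∀ (E : A) (f : S ⟶ E) (g : E ⟶ S) (w : f ≫ g = 0),
      (ShortComplex.mk f g w).ShortExact → ∃ r : E ⟶ S, f ≫ r = 𝟙 S) :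
    ∀ X : A, ∃ (F : A) (m : ℕ) (f : ⨁ (fun _ : Fin m => S) ⟶ X) (g : X ⟶ F)
      (w : f ≫ g = 0),
      (ShortComplex.mk f g w).ShortExact ∧ ∀ φ : S ⟶ F, φ = 0 := by
  haveI := hS
  suffices H : ∀ (n : ℕ) (X : A), Module.finrank k (S ⟶ X) ≤ n →
      ∃ (F : A) (m : ℕ) (f : ⨁ (fun _ : Fin m => S) ⟶ X) (g : X ⟶ F)
        (w : f ≫ g = 0),
        (ShortComplex.mk f g w).ShortExact ∧ ∀ φ : S ⟶ F, φ = 0 by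
    intro X; exact H _ X le_rfl
  intro n
  induction n with
  | zero =>
    intro X hX
    have hsub : Subsingleton (S ⟶ X) :=
      Module.finrank_zero_iff.1 (Nat.le_zero.1 hX)
    exact aux_base (fun φ => Subsingleton.elim _ _)
  | succ n ih =>
    intro X hX
    by_cases hzero : ∀ φ : S ⟶ X, φ = 0
    · exact aux_base hzero
    · push_neg at hzero
      obtain ⟨φ, hφ⟩ := hzero
      haveI hφm : Mono φ := mono_of_nonzero_from_simple hφ
      set C := cokernel φ with hC
      set π : X ⟶ C := cokernel.π φ with hπdef
      have w0 : φ ≫ π = 0 := cokernel.condition φ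
      have hse1 : (ShortComplex.mk φ π w0).ShortExact :=
        ShortComplex.ShortExact.mk'
          (ShortComplex.exact_of_g_is_cokernel _ (cokernelIsCokernel φ)) hφm
          (by dsimp; infer_instance)
      -- rank drop
      have hsurj : Function.Surjective (Linear.rightComp k S π) := by
        intro ψ
        obtain ⟨χ, hχ⟩ := aux_lift hrigid hse1 ψ
        exact ⟨χ, hχ⟩
      have hrank : Module.finrank k (S ⟶ C) < Module.finrank k (S ⟶ X) := by
        have h1 := LinearMap.finrank_range_add_finrank_ker (Linear.rightComp k S π)
        rw [LinearMap.range_eq_top.2 hsurj, finrank_top] at h1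
        have h2 : 0 < Module.finrank k (LinearMap.ker (Linear.rightComp k S π)) := by
          rw [Module.finrank_pos_iff]
          refine ⟨⟨φ, LinearMap.mem_ker.2 w0⟩, 0, ?_⟩
          simp only [ne_eq, Submodule.mk_eq_zero]
          exact hφ
        omega
      obtain ⟨F, m, f', g', w', hse', hF⟩ := ih C (by omega)
      -- lift the components of f' along π
      have hlift : ∀ i : Fin m, ∃ χi : S ⟶ X,
          χi ≫ π = biproduct.ι (fun _ : Fin m => S) i ≫ f' :=
        fun i => aux_lift hrigid hse1 _
      choose χ hχ using hlift
      set ψ : (⨁ fun _ : Fin m => S) ⟶ X := biproduct.desc χ with hψdef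
      have hψ : ψ ≫ π = f' := by
        apply biproduct.hom_ext'
        intro i
        rw [← Category.assoc, biproduct.ι_desc, hχ i]
      set f : (⨁ fun _ : Fin (m + 1) => S) ⟶ X :=
        biproduct.desc (fun j => Fin.cases φ χ j) with hfdef
      set g : X ⟶ F := π ≫ g' with hgdef
      have hι0 : biproduct.ι (fun _ : Fin (m + 1) => S) 0 ≫ f = φ := by
        rw [hfdef, biproduct.ι_desc]; simp
      have hιsucc : ∀ i : Fin m,
          biproduct.ι (fun _ : Fin (m + 1) => S) i.succ ≫ f = χ i := by
        intro i
        rw [hfdef, biproduct.ι_desc]; simp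
      have w : f ≫ g = 0 := by
        apply biproduct.hom_ext'
        intro j
        induction j using Fin.cases with
        | zero =>
          rw [comp_zero, ← Category.assoc, hι0, hgdef, ← Category.assoc, w0, zero_comp]
        | succ i =>
          rw [comp_zero, ← Category.assoc, hιsucc i, hgdef, ← Category.assoc, hχ i,
            Category.assoc, w', comp_zero]
      -- the projection to the last m coordinates
      set q : (⨁ fun _ : Fin (m + 1) => S) ⟶ (⨁ fun _ : Fin m => S) :=
        biproduct.desc (fun j => Fin.cases 0 (fun i => biproduct.ι (fun _ : Fin m => S) i) j)
        with hqdef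
      have hq : f ≫ π = q ≫ f' := by
        apply biproduct.hom_ext'
        intro j
        induction j using Fin.cases with
        | zero =>
          rw [← Category.assoc, hι0, w0, ← Category.assoc, hqdef, biproduct.ι_desc]
          simp
        | succ i =>
          rw [← Category.assoc, hιsucc i, hχ i, ← Category.assoc, hqdef, biproduct.ι_desc]
          simp
      have hqπ : ∀ i : Fin m, q ≫ biproduct.π (fun _ : Fin m => S) i =
          biproduct.π (fun _ : Fin (m + 1) => S) i.succ := by
        intro i
        apply biproduct.hom_ext'
        intro j
        induction j using Fin.cases with
        | zero =>
          rw [← Category.assoc, hqdef, biproduct.ι_desc]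
          simp [biproduct.ι_π, (Fin.succ_ne_zero i).symm]
        | succ l =>
          rw [← Category.assoc, hqdef, biproduct.ι_desc]
          simp [biproduct.ι_π, Fin.succ_inj]
      -- f is mono
      have hmono : Mono f := by
        rw [Preadditive.mono_iff_cancel_zero]
        intro T x hx
        have hxq : x ≫ q = 0 := by
          have h1 : (x ≫ q) ≫ f' = 0 := by
            rw [Category.assoc, ← hq, ← Category.assoc, hx, zero_comp]
          exact (Preadditive.mono_iff_cancel_zero f').1 hse'.mono_f _ _ h1
        have hx0 : ∀ i : Fin m, x ≫ biproduct.π (fun _ : Fin (m + 1) => S) i.succ = 0 := by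
          intro i
          rw [← hqπ i, ← Category.assoc, hxq, zero_comp]
        have hxdec : x = (x ≫ biproduct.π (fun _ : Fin (m + 1) => S) 0) ≫
            biproduct.ι (fun _ : Fin (m + 1) => S) 0 := by
          apply biproduct.hom_ext
          intro j
          induction j using Fin.cases with
          | zero => simp [biproduct.ι_π]
          | succ i =>
            rw [hx0 i, Category.assoc]
            simp [biproduct.ι_π, (Fin.succ_ne_zero i).symm]
        have h2 : (x ≫ biproduct.π (fun _ : Fin (m + 1) => S) 0) ≫ φ = 0 := by
          rw [← hι0, ← Category.assoc, ← hxdec, hx]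
        have h3 : x ≫ biproduct.π (fun _ : Fin (m + 1) => S) 0 = 0 :=
          (Preadditive.mono_iff_cancel_zero φ).1 hφm _ _ h2
        rw [hxdec, h3, zero_comp]
      -- the inclusion of the last m coordinates
      set q' : (⨁ fun _ : Fin m => S) ⟶ (⨁ fun _ : Fin (m + 1) => S) :=
        biproduct.desc (fun i => biproduct.ι (fun _ : Fin (m + 1) => S) i.succ) with hq'def
      have hq'f : q' ≫ f = ψ := by
        apply biproduct.hom_ext'
        intro i
        rw [← Category.assoc, hq'def, biproduct.ι_desc, hιsucc i, hψdef, biproduct.ι_desc]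
      -- exactness in the middle
      have hexact : (ShortComplex.mk f g w).Exact := by
        rw [ShortComplex.exact_iff_exact_up_to_refinements]
        intro T x hx
        dsimp at hx ⊢
        have h1 : (x ≫ π) ≫ g' = 0 := by rw [Category.assoc, ← hgdef, hx]
        obtain ⟨T₁, ρ₁, hρ₁, y, hy⟩ := hse'.exact.exact_up_to_refinements (x ≫ π) h1
        dsimp at hy
        set z : T₁ ⟶ X := ρ₁ ≫ x - y ≫ ψ with hzdef
        have hz : z ≫ π = 0 := by
          rw [hzdef, Preadditive.sub_comp, Category.assoc, Category.assoc, hψ, hy, sub_self]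
        obtain ⟨T₂, ρ₂, hρ₂, s, hs⟩ := hse1.exact.exact_up_to_refinements z hz
        dsimp at hs
        refine ⟨T₂, ρ₂ ≫ ρ₁, epi_comp _ _,
          s ≫ biproduct.ι (fun _ : Fin (m + 1) => S) 0 + (ρ₂ ≫ y) ≫ q', ?_⟩
        simp only [Category.assoc, Preadditive.add_comp]
        rw [hι0, hq'f, ← hs, hzdef]
        simp only [Preadditive.comp_sub, Category.assoc]
        abel
      refine ⟨F, m + 1, f, g, w, ShortComplex.ShortExact.mk' hexact hmono ?_, hF⟩
      dsimp
      rw [hgdef]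
      have : Epi g' := hse'.epi_g
      exact epi_comp _ _
end

section
/- Let H be a heart of a triangulated category D and let E be a nonzero object of D. Then the HN-filtration of E with respect to H is unique up to isomorphism: if E admits two towers of exact triangles with factors A_i ∈ H[k_i] (k_1 > ⋯ > k_m, all A_i nonzero) and B_j ∈ H[l_j] (l_1 > ⋯ > l_p, all B_j nonzero), then m = p, k_i = l_i for all i, and A_i ≅ B_i for all i. Consequently the homology H_k(E) with respect to H, defined as A_i if k = k_i and 0 otherwise, is well defined up to isomorphism. -/
open CategoryTheory CategoryTheory.Limits CategoryTheory.Pretriangulated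

universe v u

variable {C : Type u} [Category.{v} C] [HasZeroObject C] [HasShift C ℤ] [Preadditive C]
  [∀ n : ℤ, (CategoryTheory.shiftFunctor C n).Additive] [Pretriangulated C]

/-- The shift `S[k]` of a class of objects, closed under isomorphism. -/
def shiftSet (S : Set C) (k : ℤ) : Set C :=
  {X | ∃ A ∈ S, Nonempty (X ≅ A⟦k⟧)}

/-- An HN-filtration of an object `E` with respect to a class of objects `H`:
a tower of exact triangles `E_{i-1} → E_i → A_i → E_{i-1}[1]` with `E_0 = 0`,
`E_m = E` and `A_i ∈ H[k_i]` for a strictly decreasing sequence of integers `k_i`. -/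
structure HNFiltration (H : Set C) (E : C) where
  m : ℕ
  deg : Fin m → ℤ
  deg_strictAnti : ∀ i j : Fin m, i < j → deg j < deg i
  obj : Fin (m + 1) → C
  isZero_zero : IsZero (obj 0)
  obj_last : obj (Fin.last m) = E
  factor : Fin m → C
  factor_mem : ∀ i, factor i ∈ shiftSet H (deg i)
  ι : ∀ i : Fin m, obj i.castSucc ⟶ obj i.succ
  π : ∀ i : Fin m, obj i.succ ⟶ factor i
  δ : ∀ i : Fin m, factor i ⟶ (obj i.castSucc)⟦(1 : ℤ)⟧
  distinguished : ∀ i, Triangle.mk (ι i) (π i) (δ i) ∈ distTriang C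

/-- A heart of a triangulated category: a full (isomorphism-closed) additive subcategory
`H` such that (1) `Hom(H[k₁], H[k₂]) = 0` for `k₁ > k₂`, and (2) every nonzero object
admits an HN-filtration with respect to `H`. -/
structure IsHeart (H : Set C) : Prop where
  isoClosed : ∀ ⦃X Y : C⦄, (X ≅ Y) → X ∈ H → Y ∈ H
  hom_orth : ∀ (k₁ k₂ : ℤ), k₂ < k₁ → ∀ (A₁ A₂ : C),
    A₁ ∈ shiftSet H k₁ → A₂ ∈ shiftSet H k₂ → ∀ φ : A₁ ⟶ A₂, φ = 0
  filt : ∀ E : C, ¬ IsZero E → Nonempty (HNFiltration H E)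

/-!
Compare the two filtrations from the top. By orthogonality of the heart, maps from `E_j[n]`
into `H[k]` vanish once `k < k_i + n` for all factors `A_i` of `E_j`. Hence a nonzero map
`E_i → H[k]` forces `k_i ≤ k`; applied to the projections `E → A_m` and `E → B_p`, which are
nonzero because the factors are, this gives `k_m = l_p`. The same vanishing shows that the
top triangles `E_{m-1} → E → A_m` and `E'_{p-1} → E → B_p` are isomorphic, and one recurses
on `E_{m-1} ≅ E'_{p-1}`.
-/

omit [HasZeroObject C] [Preadditive C] [∀ n : ℤ, (shiftFunctor C n).Additive]
  [Pretriangulated C] in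
lemma shiftSet_shift {S : Set C} {k : ℤ} {X : C} (hX : X ∈ shiftSet S k) (n : ℤ) :
    X⟦n⟧ ∈ shiftSet S (k + n) := by
  obtain ⟨A, hA, ⟨e⟩⟩ := hX
  exact ⟨A, hA, ⟨(shiftFunctor C n).mapIso e ≪≫ ((shiftFunctorAdd C k n).app A).symm⟩⟩

namespace CategoryTheory.Pretriangulated

lemma Triangle.eq_of_mor₂_comp_eq (T : Triangle C) (hT : T ∈ distTriang C) {Z : C}
    (hZ : ∀ f : T.obj₁⟦(1 : ℤ)⟧ ⟶ Z, f = 0) {φ ψ : T.obj₃ ⟶ Z}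
    (h : T.mor₂ ≫ φ = T.mor₂ ≫ ψ) : φ = ψ := by
  obtain ⟨g, hg⟩ := Triangle.yoneda_exact₃ T hT (φ - ψ) (by rw [Preadditive.comp_sub, h, sub_self])
  rw [hZ g, Limits.comp_zero] at hg
  exact sub_eq_zero.mp hg

/-- The maps `T₁.obj₃ ⇄ T₂.obj₃` induced by `u` are mutually inverse by
`Triangle.eq_of_mor₂_comp_eq`; the resulting isomorphism of arrows `T₁.mor₂ ≅ T₂.mor₂` extends to
the rotated triangles, whose third objects are `T₁.obj₁⟦1⟧` and `T₂.obj₁⟦1⟧`. -/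
lemma nonempty_iso_obj₁_and_iso_obj₃_of_iso_obj₂ (T₁ T₂ : Triangle C)
    (hT₁ : T₁ ∈ distTriang C) (hT₂ : T₂ ∈ distTriang C) (u : T₁.obj₂ ≅ T₂.obj₂)
    (h₁₂ : ∀ f : T₁.obj₁ ⟶ T₂.obj₃, f = 0) (h₂₁ : ∀ f : T₂.obj₁ ⟶ T₁.obj₃, f = 0)
    (h₁ : ∀ f : T₁.obj₁⟦(1 : ℤ)⟧ ⟶ T₁.obj₃, f = 0)
    (h₂ : ∀ f : T₂.obj₁⟦(1 : ℤ)⟧ ⟶ T₂.obj₃, f = 0) :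
    Nonempty (T₁.obj₁ ≅ T₂.obj₁) ∧ Nonempty (T₁.obj₃ ≅ T₂.obj₃) := by
  obtain ⟨g, hg⟩ := Triangle.yoneda_exact₂ T₁ hT₁ (u.hom ≫ T₂.mor₂)
    (by rw [← Category.assoc]; exact h₁₂ _)
  obtain ⟨g', hg'⟩ := Triangle.yoneda_exact₂ T₂ hT₂ (u.inv ≫ T₁.mor₂)
    (by rw [← Category.assoc]; exact h₂₁ _)
  let e₃ : T₁.obj₃ ≅ T₂.obj₃ :=
    { hom := g
      inv := g'
      hom_inv_id := Triangle.eq_of_mor₂_comp_eq T₁ hT₁ h₁ <| by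
        rw [← Category.assoc, ← hg, Category.assoc, ← hg', u.hom_inv_id_assoc, Category.comp_id]
      inv_hom_id := Triangle.eq_of_mor₂_comp_eq T₂ hT₂ h₂ <| by
        rw [← Category.assoc, ← hg', Category.assoc, ← hg, u.inv_hom_id_assoc, Category.comp_id] }
  obtain ⟨e, -, -⟩ := exists_iso_of_arrow_iso _ _ (rot_of_distTriang _ hT₁)
    (rot_of_distTriang _ hT₂) (Arrow.isoMk u e₃ hg)
  exact ⟨⟨(shiftFunctor C (1 : ℤ)).preimageIso (Triangle.π₃.mapIso e)⟩, ⟨e₃⟩⟩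

end CategoryTheory.Pretriangulated

namespace HNFiltration

variable {H : Set C} {E : C}

def trunc (F : HNFiltration H E) {n : ℕ} (hm : F.m = n + 1) :
    HNFiltration H (F.obj ⟨n, by omega⟩) where
  m := n
  deg i := F.deg (Fin.castLE (by omega) i)
  deg_strictAnti i j h := F.deg_strictAnti _ _ h
  obj j := F.obj (Fin.castLE (by omega) j)
  isZero_zero := by simpa using F.isZero_zero
  obj_last := rfl
  factor i := F.factor (Fin.castLE (by omega) i)
  factor_mem i := F.factor_mem _
  ι i := F.ι (Fin.castLE (by omega) i)
  π i := F.π (Fin.castLE (by omega) i)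
  δ i := F.δ (Fin.castLE (by omega) i)
  distinguished i := F.distinguished _

lemma obj_succ_eq_of_val_add_one_eq (F : HNFiltration H E) {i : Fin F.m}
    (hi : (i : ℕ) + 1 = F.m) : F.obj i.succ = E := by
  rw [show i.succ = Fin.last F.m from Fin.ext hi, F.obj_last]

lemma deg_antitone (F : HNFiltration H E) : Antitone F.deg :=
  StrictAnti.antitone fun _ _ h ↦ F.deg_strictAnti _ _ h

variable (hH : IsHeart H) (F : HNFiltration H E)
include hH

/-- Induction on `j` along the shifted triangles `E_{i-1}[n] → E_i[n] → A_i[n]`, where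
`Hom(A_i[n], A) = 0` because `A_i[n] ∈ H[k_i + n]` with `k < k_i + n`. -/
lemma shift_obj_hom_eq_zero {A : C} {k : ℤ} (hA : A ∈ shiftSet H k) (n : ℤ)
    (j : Fin (F.m + 1)) (hj : ∀ i : Fin F.m, i.castSucc < j → k < F.deg i + n)
    (f : (F.obj j)⟦n⟧ ⟶ A) : f = 0 := by
  induction j using Fin.induction with
  | zero => exact ((shiftFunctor C n).map_isZero F.isZero_zero).eq_zero_of_src f
  | succ i ih =>
    let T := (shiftFunctor (Triangle C) n).obj (Triangle.mk (F.ι i) (F.π i) (F.δ i))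
    have hT : T ∈ distTriang C := Triangle.shift_distinguished _ (F.distinguished i) n
    obtain ⟨g, hg⟩ := Triangle.yoneda_exact₂ T hT f
      (ih (fun i' hi' ↦ hj i' (hi'.trans Fin.castSucc_lt_succ)) _)
    obtain rfl : g = 0 := hH.hom_orth _ _ (hj i Fin.castSucc_lt_succ) _ _
      (shiftSet_shift (F.factor_mem i) n) hA g
    exact hg.trans Limits.comp_zero

lemma obj_hom_eq_zero {A : C} {k : ℤ} (hA : A ∈ shiftSet H k) (j : Fin (F.m + 1))
    (hj : ∀ i : Fin F.m, i.castSucc < j → k < F.deg i) (f : F.obj j ⟶ A) : f = 0 := by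
  have h₀ := F.shift_obj_hom_eq_zero hH hA 0 j (fun i hi ↦ by simpa using hj i hi)
    ((shiftFunctorZero C ℤ).hom.app (F.obj j) ≫ f)
  simpa using h₀

lemma shift_obj_castSucc_hom_factor_eq_zero (i : Fin F.m)
    (f : (F.obj i.castSucc)⟦(1 : ℤ)⟧ ⟶ F.factor i) : f = 0 :=
  F.shift_obj_hom_eq_zero hH (F.factor_mem i) 1 _
    (fun i' hi' ↦ by have := F.deg_strictAnti i' i (Fin.castSucc_lt_castSucc_iff.1 hi'); omega) f

lemma obj_castSucc_hom_eq_zero (i : Fin F.m) {A : C} (hA : A ∈ shiftSet H (F.deg i))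
    (f : F.obj i.castSucc ⟶ A) : f = 0 :=
  F.obj_hom_eq_zero hH hA _
    (fun i' hi' ↦ F.deg_strictAnti i' i (Fin.castSucc_lt_castSucc_iff.1 hi')) f

lemma π_ne_zero {i : Fin F.m} (hi : ¬IsZero (F.factor i)) : F.π i ≠ 0 := by
  intro hπ
  obtain ⟨g, hg⟩ := Triangle.yoneda_exact₃ _ (F.distinguished i) (𝟙 (F.factor i))
    ((Category.comp_id _).trans hπ)
  obtain rfl : g = 0 := F.shift_obj_castSucc_hom_factor_eq_zero hH i g
  exact hi ((IsZero.iff_id_eq_zero _).2 (hg.trans Limits.comp_zero))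

lemma deg_le_of_hom_ne_zero {i : Fin F.m} {A : C} {k : ℤ} (hA : A ∈ shiftSet H k)
    (f : F.obj i.succ ⟶ A) (hf : f ≠ 0) : F.deg i ≤ k := by
  by_contra! hk
  exact hf (F.obj_hom_eq_zero hH hA _ (fun i' hi' ↦
    hk.trans_le (F.deg_antitone (Fin.castSucc_lt_succ_iff.1 hi'))) f)

lemma isZero_iff_m_eq_zero (hF : ∀ i, ¬IsZero (F.factor i)) : IsZero E ↔ F.m = 0 := by
  constructor
  · intro hE
    by_contra hm
    let i : Fin F.m := ⟨F.m - 1, by omega⟩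
    refine F.π_ne_zero hH (hF i) (IsZero.eq_zero_of_src ?_ _)
    rwa [F.obj_succ_eq_of_val_add_one_eq (i := i) (by simp [i]; omega)]
  · intro hm
    rw [← F.obj_last]
    convert F.isZero_zero using 2
    ext
    simp [hm]

lemma deg_eq_and_nonempty_iso_of_iso_obj_succ {E₁ E₂ : C} (F₁ : HNFiltration H E₁)
    (F₂ : HNFiltration H E₂) {a : Fin F₁.m} {b : Fin F₂.m} (ha : ¬IsZero (F₁.factor a))
    (hb : ¬IsZero (F₂.factor b)) (u : F₁.obj a.succ ≅ F₂.obj b.succ) :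
    F₁.deg a = F₂.deg b ∧ Nonempty (F₁.obj a.castSucc ≅ F₂.obj b.castSucc) ∧
      Nonempty (F₁.factor a ≅ F₂.factor b) := by
  have hdeg : F₁.deg a = F₂.deg b := le_antisymm
    (F₁.deg_le_of_hom_ne_zero hH (F₂.factor_mem b) (u.hom ≫ F₂.π b)
      (by simpa using F₂.π_ne_zero hH hb))
    (F₂.deg_le_of_hom_ne_zero hH (F₁.factor_mem a) (u.inv ≫ F₁.π a)
      (by simpa using F₁.π_ne_zero hH ha))
  exact ⟨hdeg, nonempty_iso_obj₁_and_iso_obj₃_of_iso_obj₂ _ _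
    (F₁.distinguished a) (F₂.distinguished b) u
    (F₁.obj_castSucc_hom_eq_zero hH a (hdeg ▸ F₂.factor_mem b))
    (F₂.obj_castSucc_hom_eq_zero hH b (hdeg ▸ F₁.factor_mem a))
    (F₁.shift_obj_castSucc_hom_factor_eq_zero hH a)
    (F₂.shift_obj_castSucc_hom_factor_eq_zero hH b)⟩

theorem factors_unique_of_iso {E₁ E₂ : C} (e : E₁ ≅ E₂) (F₁ : HNFiltration H E₁)
    (F₂ : HNFiltration H E₂) (h₁ : ∀ i, ¬IsZero (F₁.factor i))
    (h₂ : ∀ i, ¬IsZero (F₂.factor i)) :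
    ∃ hm : F₁.m = F₂.m, ∀ i : Fin F₁.m,
      F₁.deg i = F₂.deg (Fin.cast hm i) ∧
      Nonempty (F₁.factor i ≅ F₂.factor (Fin.cast hm i)) := by
  obtain ⟨n, hn⟩ : ∃ n, F₁.m = n := ⟨_, rfl⟩
  induction n generalizing E₁ E₂ with
  | zero =>
    have hm₂ : F₂.m = 0 := by
      rw [← F₂.isZero_iff_m_eq_zero hH h₂, ← e.isZero_iff, F₁.isZero_iff_m_eq_zero hH h₁, hn]
    exact ⟨by omega, fun i ↦ absurd i.isLt (by omega)⟩
  | succ n ih =>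
    obtain ⟨p, hm₂⟩ : ∃ p, F₂.m = p + 1 := Nat.exists_eq_succ_of_ne_zero <| by
      rw [ne_eq, ← F₂.isZero_iff_m_eq_zero hH h₂, ← e.isZero_iff,
        F₁.isZero_iff_m_eq_zero hH h₁, hn]
      omega
    let a : Fin F₁.m := ⟨n, by omega⟩
    let b : Fin F₂.m := ⟨p, by omega⟩
    let u : F₁.obj a.succ ≅ F₂.obj b.succ :=
      eqToIso (F₁.obj_succ_eq_of_val_add_one_eq (by simp [a]; omega)) ≪≫ e ≪≫
        eqToIso (F₂.obj_succ_eq_of_val_add_one_eq (by simp [b]; omega)).symm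
    obtain ⟨hdeg, ⟨e'⟩, ⟨eA⟩⟩ :=
      deg_eq_and_nonempty_iso_of_iso_obj_succ hH F₁ F₂ (h₁ a) (h₂ b) u
    obtain ⟨hnp : n = p, hlower⟩ :=
      ih e' (F₁.trunc hn) (F₂.trunc hm₂) (fun _ ↦ h₁ _) (fun _ ↦ h₂ _) rfl
    subst hnp
    refine ⟨by omega, fun i ↦ ?_⟩
    rcases Nat.lt_or_ge i n with hi | hi
    · exact hlower ⟨i, hi⟩
    · obtain rfl : i = a := Fin.ext (by simp [a]; omega)
      exact ⟨hdeg, ⟨eA⟩⟩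

end HNFiltration

theorem statement_3_general (H : Set C) (hH : IsHeart H) (E : C)
    (F₁ F₂ : HNFiltration H E)
    (h₁ : ∀ i, ¬ IsZero (F₁.factor i)) (h₂ : ∀ i, ¬ IsZero (F₂.factor i)) :
    ∃ hm : F₁.m = F₂.m, ∀ i : Fin F₁.m,
      F₁.deg i = F₂.deg (Fin.cast hm i) ∧
      Nonempty (F₁.factor i ≅ F₂.factor (Fin.cast hm i)) :=
  HNFiltration.factors_unique_of_iso hH (Iso.refl E) F₁ F₂ h₁ h₂

/-- the HN-filtration of a nonzero object with respect to a heart is unique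
up to isomorphism: two HN-filtrations with nonzero factors have the same length, the same
degrees, and isomorphic factors. -/
theorem statement_3 (H : Set C) (hH : IsHeart H) (E : C) (hE : ¬ IsZero E)
    (F₁ F₂ : HNFiltration H E)
    (h₁ : ∀ i, ¬ IsZero (F₁.factor i)) (h₂ : ∀ i, ¬ IsZero (F₂.factor i)) :
    ∃ hm : F₁.m = F₂.m, ∀ i : Fin F₁.m,
      F₁.deg i = F₂.deg (Fin.cast hm i) ∧
      Nonempty (F₁.factor i ≅ F₂.factor (Fin.cast hm i)) :=
  statement_3_general H hH E F₁ F₂ h₁ h₂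
end

section
/- (Happel–Reiten–Smalø tilting) Let H be a heart of a triangulated category D and let ⟨T, F⟩ be a torsion pair in H. Then the full subcategory H♯ = {E ∈ D : there exists an exact triangle A → E → B → A[1] with A ∈ F[1] and B ∈ T} is again a heart of D, with torsion pair ⟨F[1], T⟩; and the full subcategory H♭ = {E ∈ D : there exists an exact triangle A → E → B → A[1] with A ∈ F and B ∈ T[-1]} is again a heart of D, with torsion pair ⟨F, T[-1]⟩. -/
/-!
The category is only pretriangulated, so no octahedral axiom is available to merge or refine
filtrations: every object needed is produced as a cone and recognised by Hom-vanishing. For a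
heart `H` this is possible because an object with no maps to `H[k]` for `k < lo` and none from
`H[k]` for `k > hi` has an HN-filtration with degrees in `[lo, hi]`, the other factors being zero.
In particular `V` is zero or lies in `H♯[a]` once it has no maps to `H[k]`, `k < a`, or to
`F[a]`, and none from `H[k]`, `k > a + 1`, or from `T[a + 1]`.

An `H♯`-filtration of `E` is built by induction on the width of an `H`-filtration. The torsion-free
part `Y ∈ F[d] ⊆ H♯[d - 1]` of the bottom factor is split off; the fibre has no maps to `F[d]`, so
the bottom factor of its own filtration is torsion, and together with the `F[d + 1]`-part of the
next factor it forms the piece in `H♯[d]`. Orthogonality in `H♯` is checked on the two pieces of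
its objects, and `H♭` is the forward tilt of the heart `H[-1]` with respect to `⟨T[-1], F[-1]⟩`.
-/

open CategoryTheory CategoryTheory.Limits CategoryTheory.Pretriangulated

universe v u

variable {C : Type u} [Category.{v} C] [HasZeroObject C] [HasShift C ℤ] [Preadditive C]
  [∀ n : ℤ, (CategoryTheory.shiftFunctor C n).Additive] [Pretriangulated C]

/-- A torsion pair `⟨T, F⟩` in a heart `H` of a triangulated category: `T, F ⊆ H` are
isomorphism-closed, `Hom(T, F) = 0`, and every `E ∈ H` fits in an exact triangle
`E^T → E → E^F → E^T[1]` with `E^T ∈ T` and `E^F ∈ F`. -/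
structure IsTorsionPair (H T F : Set C) : Prop where
  isoClosedT : ∀ ⦃X Y : C⦄, (X ≅ Y) → X ∈ T → Y ∈ T
  isoClosedF : ∀ ⦃X Y : C⦄, (X ≅ Y) → X ∈ F → Y ∈ F
  subsetT : T ⊆ H
  subsetF : F ⊆ H
  hom_zero : ∀ X ∈ T, ∀ Y ∈ F, ∀ φ : X ⟶ Y, φ = 0
  decomp : ∀ E ∈ H, ∃ (X Y : C) (f : X ⟶ E) (g : E ⟶ Y) (h : Y ⟶ X⟦(1 : ℤ)⟧),
    X ∈ T ∧ Y ∈ F ∧ Triangle.mk f g h ∈ distTriang C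

/-- The forward tilt `H♯` of a heart with respect to a torsion pair `⟨T, F⟩`:
objects `E` fitting in an exact triangle `A → E → B → A[1]` with `A ∈ F[1]`, `B ∈ T`. -/
def forwardTilt (T F : Set C) : Set C :=
  {E | ∃ (X Y : C) (f : X ⟶ E) (g : E ⟶ Y) (h : Y ⟶ X⟦(1 : ℤ)⟧),
    X ∈ shiftSet F 1 ∧ Y ∈ T ∧ Triangle.mk f g h ∈ distTriang C}

/-- The backward tilt `H♭` of a heart with respect to a torsion pair `⟨T, F⟩`:
objects `E` fitting in an exact triangle `A → E → B → A[1]` with `A ∈ F`, `B ∈ T[-1]`. -/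
def backwardTilt (T F : Set C) : Set C :=
  {E | ∃ (X Y : C) (f : X ⟶ E) (g : E ⟶ Y) (h : Y ⟶ X⟦(1 : ℤ)⟧),
    X ∈ F ∧ Y ∈ shiftSet T (-1) ∧ Triangle.mk f g h ∈ distTriang C}

set_option linter.unusedSectionVars false

def HomZero (X Y : C) : Prop := ∀ f : X ⟶ Y, f = 0

namespace HomZero

lemma of_iso {X X' Y Y' : C} (eX : X' ≅ X) (eY : Y' ≅ Y) (h : HomZero X Y) :
    HomZero X' Y' := fun f => by
  simpa using congrArg (fun g => eX.hom ≫ g ≫ eY.inv) (h (eX.inv ≫ f ≫ eY.hom))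

lemma shift {X Y : C} (h : HomZero X Y) (n : ℤ) : HomZero (X⟦n⟧) (Y⟦n⟧) := fun f => by
  obtain ⟨g, rfl⟩ := (shiftFunctor C n).map_surjective f
  rw [h g, Functor.map_zero]

lemma of_shift {X Y : C} (n : ℤ) (h : HomZero (X⟦n⟧) (Y⟦n⟧)) : HomZero X Y := fun _ =>
  (shiftFunctor C n).map_injective ((h _).trans (Functor.map_zero _ _ _).symm)

end HomZero

lemma homZero_obj₂_src {T : Triangle C} (hT : T ∈ distTriang C) {Q : C}
    (h₁ : HomZero T.obj₁ Q) (h₃ : HomZero T.obj₃ Q) : HomZero T.obj₂ Q := fun f => by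
  obtain ⟨g, rfl⟩ := Triangle.yoneda_exact₂ T hT f (h₁ _)
  rw [h₃ g, comp_zero]

lemma homZero_obj₂_tgt {T : Triangle C} (hT : T ∈ distTriang C) {Q : C}
    (h₁ : HomZero Q T.obj₁) (h₃ : HomZero Q T.obj₃) : HomZero Q T.obj₂ := fun f => by
  obtain ⟨g, rfl⟩ := Triangle.coyoneda_exact₂ T hT f (h₃ _)
  rw [h₁ g, zero_comp]

lemma isZero₃_of_mor₂_eq_zero {T : Triangle C} (hT : T ∈ distTriang C) (h₂ : T.mor₂ = 0)
    (h : HomZero (T.obj₁⟦(1 : ℤ)⟧) T.obj₃) : IsZero T.obj₃ := by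
  rw [IsZero.iff_id_eq_zero]
  obtain ⟨g, hg⟩ := Triangle.yoneda_exact₃ T hT (𝟙 _) (by rw [h₂, zero_comp])
  rw [hg, h g, comp_zero]

lemma isZero₁_of_mor₁_eq_zero {T : Triangle C} (hT : T ∈ distTriang C) (h₁ : T.mor₁ = 0)
    (h : HomZero (T.obj₁⟦(1 : ℤ)⟧) T.obj₃) : IsZero T.obj₁ := by
  rw [IsZero.iff_id_eq_zero]
  refine (shiftFunctor C (1 : ℤ)).map_injective ?_
  obtain ⟨g, hg⟩ := Triangle.coyoneda_exact₁ T hT (𝟙 _) (by rw [h₁, Functor.map_zero, comp_zero])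
  rw [Functor.map_zero, CategoryTheory.Functor.map_id, hg, h g, zero_comp]

/-- The octahedral axiom would exhibit `M` as an extension of `X` by `N`; the conclusion is proved
here without it. -/
lemma homZero_fiber_comp {N E A X Y M Q : C} {ι : N ⟶ E} {π : E ⟶ A} {δ : A ⟶ N⟦(1 : ℤ)⟧}
    {s : X ⟶ A} {u : A ⟶ Y} {δ' : Y ⟶ X⟦(1 : ℤ)⟧} {g : M ⟶ E} {δ'' : Y ⟶ M⟦(1 : ℤ)⟧}
    (h₁ : Triangle.mk ι π δ ∈ distTriang C) (h₂ : Triangle.mk s u δ' ∈ distTriang C)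
    (h₃ : Triangle.mk g (π ≫ u) δ'' ∈ distTriang C)
    (hN : HomZero N Q) (hX : HomZero X Q) : HomZero M Q := by
  have h₃₁ : g ≫ π ≫ u = 0 := comp_distTriang_mor_zero₁₂ _ h₃
  have h₃₂ : (π ≫ u) ≫ δ'' = 0 := comp_distTriang_mor_zero₂₃ _ h₃
  have hg : ∀ ψ : E ⟶ Q, g ≫ ψ = 0 := fun ψ => by
    obtain ⟨χ, rfl⟩ : ∃ χ : A ⟶ Q, ψ = π ≫ χ := Triangle.yoneda_exact₂ _ h₁ ψ (hN _)
    obtain ⟨σ, hσ⟩ : ∃ σ : M ⟶ X, g ≫ π = σ ≫ s :=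
      Triangle.coyoneda_exact₂ _ h₂ (g ≫ π) (by rwa [Category.assoc] : (g ≫ π) ≫ u = 0)
    rw [← Category.assoc, hσ, Category.assoc, hX (s ≫ χ), comp_zero]
  refine HomZero.of_shift 1 fun φ => ?_
  have hδφ : δ'' ≫ φ = 0 := by
    obtain ⟨ω, hω⟩ : ∃ ω : N⟦(1 : ℤ)⟧ ⟶ Q⟦(1 : ℤ)⟧, u ≫ δ'' ≫ φ = δ ≫ ω :=
      Triangle.yoneda_exact₃ _ h₁ (u ≫ δ'' ≫ φ)
        (by simp [reassoc_of% h₃₂] : π ≫ u ≫ δ'' ≫ φ = 0)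
    obtain ⟨ϑ, hϑ⟩ : ∃ ϑ : X⟦(1 : ℤ)⟧ ⟶ Q⟦(1 : ℤ)⟧, δ'' ≫ φ = δ' ≫ ϑ :=
      Triangle.yoneda_exact₃ _ h₂ (δ'' ≫ φ) (by rw [hω, hN.shift 1 ω, comp_zero] : u ≫ δ'' ≫ φ = 0)
    rw [hϑ, hX.shift 1 ϑ, comp_zero]
  obtain ⟨ψ, rfl⟩ : ∃ ψ : E⟦(1 : ℤ)⟧ ⟶ Q⟦(1 : ℤ)⟧, φ = (-g⟦(1 : ℤ)⟧') ≫ ψ :=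
    Triangle.yoneda_exact₃ _ (rot_of_distTriang _ h₃) φ hδφ
  obtain ⟨ψ₀, rfl⟩ := (shiftFunctor C (1 : ℤ)).map_surjective ψ
  rw [Preadditive.neg_comp, ← Functor.map_comp, hg ψ₀, Functor.map_zero, neg_zero]

/-- The octahedral axiom would exhibit `V` as an extension of `C'` by `W`; the conclusion is proved
here without it. -/
lemma homZero_cofiber_comp {N₁ N M W C' V Q : C} {α : N₁ ⟶ N} {β : N ⟶ W}
    {γ : W ⟶ N₁⟦(1 : ℤ)⟧} {j : N ⟶ M} {π : M ⟶ C'} {δ : C' ⟶ N⟦(1 : ℤ)⟧} {e : M ⟶ V}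
    {δV : V ⟶ N₁⟦(1 : ℤ)⟧} (h₁ : Triangle.mk α β γ ∈ distTriang C)
    (h₂ : Triangle.mk j π δ ∈ distTriang C) (h₃ : Triangle.mk (α ≫ j) e δV ∈ distTriang C)
    (hW : HomZero Q W) (hC : HomZero Q C') : HomZero Q V := fun φ => by
  obtain ⟨π₂, -, hπ₂⟩ : ∃ π₂ : V ⟶ C', e ≫ π₂ = 𝟙 M ≫ π ∧ δV ≫ α⟦(1 : ℤ)⟧' = π₂ ≫ δ :=
    complete_distinguished_triangle_morphism _ _ h₃ h₂ α (𝟙 M) (Category.comp_id _)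
  have hφδ : φ ≫ δV = 0 := by
    obtain ⟨ω, hω⟩ : ∃ ω : Q ⟶ W, φ ≫ δV = ω ≫ γ :=
      Triangle.coyoneda_exact₃ _ (rot_of_distTriang _ h₁) (φ ≫ δV)
        (by simp [hπ₂, reassoc_of% (hC (φ ≫ π₂))] : (φ ≫ δV) ≫ (-α⟦(1 : ℤ)⟧') = 0)
    rw [hω, hW ω, zero_comp]
  obtain ⟨χ, rfl⟩ : ∃ χ : Q ⟶ M, φ = χ ≫ e := Triangle.coyoneda_exact₃ _ h₃ φ hφδ
  obtain ⟨χ', rfl⟩ : ∃ χ' : Q ⟶ N, χ = χ' ≫ j := Triangle.coyoneda_exact₂ _ h₂ χ (hC _)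
  obtain ⟨χ'', rfl⟩ : ∃ χ'' : Q ⟶ N₁, χ' = χ'' ≫ α := Triangle.coyoneda_exact₂ _ h₁ χ' (hW _)
  have h₃₁ : (α ≫ j) ≫ e = 0 := comp_distTriang_mor_zero₁₂ _ h₃
  simp [h₃₁]

section ShiftSet

variable {S : Set C}

lemma mem_shiftSet_of_iso {k : ℤ} {X Y : C} (e : X ≅ Y) (hX : X ∈ shiftSet S k) :
    Y ∈ shiftSet S k := by
  obtain ⟨A, hA, ⟨e'⟩⟩ := hX
  exact ⟨A, hA, ⟨e.symm ≪≫ e'⟩⟩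

lemma shift_mem_shiftSet {A : C} (hA : A ∈ S) (k : ℤ) : A⟦k⟧ ∈ shiftSet S k :=
  ⟨A, hA, ⟨Iso.refl _⟩⟩

lemma mem_shiftSet_zero {A : C} (hA : A ∈ S) : A ∈ shiftSet S 0 :=
  ⟨A, hA, ⟨((shiftFunctorZero C ℤ).app A).symm⟩⟩

lemma shift_mem_shiftSet_add {X : C} {a : ℤ} (hX : X ∈ shiftSet S a) (b : ℤ) :
    X⟦b⟧ ∈ shiftSet S (a + b) := by
  obtain ⟨A, hA, ⟨e⟩⟩ := hX
  exact ⟨A, hA, ⟨(shiftFunctor C b).mapIso e ≪≫ ((shiftFunctorAdd C a b).app A).symm⟩⟩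

lemma shiftSet_shiftSet (a b : ℤ) : shiftSet (shiftSet S a) b = shiftSet S (a + b) := by
  ext X
  constructor
  · rintro ⟨A, hA, ⟨e⟩⟩
    exact mem_shiftSet_of_iso e.symm (shift_mem_shiftSet_add hA b)
  · rintro ⟨A, hA, ⟨e⟩⟩
    exact ⟨A⟦a⟧, shift_mem_shiftSet hA a, ⟨e ≪≫ (shiftFunctorAdd C a b).app A⟩⟩

lemma shiftSet_mono {S' : Set C} (h : S ⊆ S') (k : ℤ) : shiftSet S k ⊆ shiftSet S' k := by
  rintro X ⟨A, hA, he⟩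
  exact ⟨A, h hA, he⟩

lemma shiftSet_of_add_eq_zero (hS : ∀ ⦃X Y : C⦄, (X ≅ Y) → X ∈ S → Y ∈ S) {a b : ℤ}
    (h : a + b = 0) : shiftSet (shiftSet S a) b = S := by
  ext X
  rw [shiftSet_shiftSet, h]
  refine ⟨fun ⟨A, hA, ⟨e⟩⟩ => hS (((shiftFunctorZero C ℤ).app A).symm ≪≫ e.symm) hA,
    mem_shiftSet_zero⟩

end ShiftSet

lemma distTriang_of_iso₂ {X Y Y' Z : C} {f : X ⟶ Y} {g : Y ⟶ Z} {h : Z ⟶ X⟦(1 : ℤ)⟧}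
    (hT : Triangle.mk f g h ∈ distTriang C) (e : Y ≅ Y') :
    Triangle.mk (f ≫ e.hom) (e.inv ≫ g) h ∈ distTriang C :=
  isomorphic_distinguished _ hT _ <| Triangle.isoMk _ _ (Iso.refl _) e.symm (Iso.refl _)
    (by dsimp [Triangle.mk]; simp) (by dsimp [Triangle.mk]; simp) (by dsimp [Triangle.mk]; simp)

lemma distTriang_eqToHom {X X' Y Y' Z Z' : C} (hX : X = X') (hY : Y = Y') (hZ : Z = Z')
    {f : X' ⟶ Y'} {g : Y' ⟶ Z'} {h : Z' ⟶ X'⟦(1 : ℤ)⟧}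
    (hT : Triangle.mk f g h ∈ distTriang C) :
    Triangle.mk (eqToHom hX ≫ f ≫ eqToHom hY.symm) (eqToHom hY ≫ g ≫ eqToHom hZ.symm)
      (eqToHom hZ ≫ h ≫ eqToHom (congrArg (·⟦(1 : ℤ)⟧) hX.symm)) ∈ distTriang C := by
  subst hX hY hZ
  simpa using hT

/-- `HasFiltration S lo hi E`: `E` has an `HNFiltration` with respect to `S` whose degrees lie
in `[lo, hi]`, built from the zero object by appending factors of decreasing degree. -/
inductive HasFiltration (S : Set C) : ℤ → ℤ → C → Prop
  | zero {lo hi : ℤ} {E : C} : IsZero E → HasFiltration S lo hi E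
  | snoc {lo hi d : ℤ} {M E P : C} {f : M ⟶ E} {g : E ⟶ P} {h : P ⟶ M⟦(1 : ℤ)⟧} :
      HasFiltration S (d + 1) hi M → Triangle.mk f g h ∈ distTriang C → P ∈ shiftSet S d →
      lo ≤ d → d ≤ hi → HasFiltration S lo hi E

namespace HasFiltration

variable {S : Set C} {lo hi : ℤ}

lemma mono {E : C} (hE : HasFiltration S lo hi E) {lo' hi' : ℤ} (hlo : lo' ≤ lo)
    (hhi : hi ≤ hi') : HasFiltration S lo' hi' E := by
  induction hE generalizing lo' with
  | zero hE => exact zero hE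
  | snoc _ hT hP hd₁ hd₂ ih => exact snoc (ih le_rfl hhi) hT hP (by omega) (by omega)

lemma of_iso {E E' : C} (e : E ≅ E') (hE : HasFiltration S lo hi E) :
    HasFiltration S lo hi E' := by
  cases hE with
  | zero hE => exact zero (hE.of_iso e.symm)
  | snoc hM hT hP hd₁ hd₂ => exact snoc hM (distTriang_of_iso₂ hT e) hP hd₁ hd₂

lemma of_lt_isZero {E : C} (hE : HasFiltration S lo hi E) (h : hi < lo) : IsZero E := by
  cases hE with
  | zero hE => exact hE
  | snoc _ _ _ hd₁ hd₂ => omega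

lemma of_distTriang_isZero₃ {M E P : C} {f : M ⟶ E} {g : E ⟶ P} {h : P ⟶ M⟦(1 : ℤ)⟧}
    (hM : HasFiltration S lo hi M) (hT : Triangle.mk f g h ∈ distTriang C) (hP : IsZero P) :
    HasFiltration S lo hi E :=
  have : IsIso f := (Triangle.isZero₃_iff_isIso₁ _ hT).mp hP
  hM.of_iso (asIso f)

lemma isZero_or_mem {d : ℤ} {E : C} (hE : HasFiltration S d d E) :
    IsZero E ∨ E ∈ shiftSet S d := by
  cases hE with
  | zero hE => exact Or.inl hE
  | @snoc _ _ d' M _ P f g h hM hT hP hd₁ hd₂ =>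
    obtain rfl : d' = d := by omega
    have : IsIso g := (Triangle.isZero₁_iff_isIso₂ _ hT).mp (hM.of_lt_isZero (by omega))
    exact Or.inr (mem_shiftSet_of_iso (asIso g).symm hP)

lemma shift {E : C} (hE : HasFiltration S lo hi E) (n : ℤ) :
    HasFiltration S (lo + n) (hi + n) (E⟦n⟧) := by
  induction hE with
  | zero hE => exact zero ((shiftFunctor C n).map_isZero hE)
  | snoc _ hT hP hd₁ hd₂ ih =>
    exact snoc (by rwa [add_right_comm]) (Triangle.shift_distinguished _ hT n)
      (shift_mem_shiftSet_add hP n) (by omega) (by omega)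

lemma to_shiftSet {E : C} (hE : HasFiltration S lo hi E) (n : ℤ) :
    HasFiltration (shiftSet S n) (lo - n) (hi - n) E := by
  induction hE with
  | zero hE => exact zero hE
  | @snoc _ _ d _ _ _ _ _ _ _ hT hP hd₁ hd₂ ih =>
    refine snoc (by rwa [sub_add_eq_add_sub]) hT ?_ (by omega) (by omega)
    rwa [shiftSet_shiftSet, add_sub_cancel]

lemma homZero_src {E Q : C} (hE : HasFiltration S lo hi E)
    (h : ∀ k, lo ≤ k → k ≤ hi → ∀ P ∈ shiftSet S k, HomZero P Q) : HomZero E Q := by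
  induction hE with
  | zero hE => exact fun f => hE.eq_of_src f 0
  | snoc _ hT hP hd₁ hd₂ ih =>
    exact homZero_obj₂_src hT (ih fun k hk₁ hk₂ => h k (by omega) hk₂) (h _ hd₁ hd₂ _ hP)

lemma homZero_tgt {E Q : C} (hE : HasFiltration S lo hi E)
    (h : ∀ k, lo ≤ k → k ≤ hi → ∀ P ∈ shiftSet S k, HomZero Q P) : HomZero Q E := by
  induction hE with
  | zero hE => exact fun f => hE.eq_of_tgt f 0
  | snoc _ hT hP hd₁ hd₂ ih =>
    exact homZero_obj₂_tgt hT (ih fun k hk₁ hk₂ => h k (by omega) hk₂) (h _ hd₁ hd₂ _ hP)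

end HasFiltration

namespace HNFiltration

variable {S : Set C}

lemma exists_hasFiltration {E : C} (𝒻 : HNFiltration S E) : ∃ lo hi, HasFiltration S lo hi E := by
  obtain ⟨lo, hlo⟩ := (Set.finite_range 𝒻.deg).bddBelow
  obtain ⟨hi, hhi⟩ := (Set.finite_range 𝒻.deg).bddAbove
  have key : ∀ i : Fin (𝒻.m + 1), ∀ lo', (∀ j : Fin 𝒻.m, j.castSucc < i → lo' ≤ 𝒻.deg j) →
      HasFiltration S lo' hi (𝒻.obj i) := by
    intro i
    induction i using Fin.induction with
    | zero => exact fun _ _ => .zero 𝒻.isZero_zero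
    | succ j ih =>
      refine fun lo' hlo' => .snoc (ih _ fun j' hj' => ?_) (𝒻.distinguished j) (𝒻.factor_mem j)
        (hlo' j Fin.castSucc_lt_succ) (hhi ⟨j, rfl⟩)
      have := 𝒻.deg_strictAnti j' j (Fin.castSucc_lt_castSucc_iff.mp hj')
      omega
  exact ⟨lo, hi, 𝒻.obj_last ▸ key _ lo fun j _ => hlo ⟨j, rfl⟩⟩

noncomputable def ofIsZero (S : Set C) {E : C} (hE : IsZero E) : HNFiltration S E where
  m := 0
  deg := Fin.elim0
  deg_strictAnti := fun i => i.elim0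
  obj := fun _ => E
  isZero_zero := hE
  obj_last := rfl
  factor := Fin.elim0
  factor_mem := fun i => i.elim0
  ι := fun i => i.elim0
  π := fun i => i.elim0
  δ := fun i => i.elim0
  distinguished := fun i => i.elim0

noncomputable def snoc {M E P : C} (𝒻 : HNFiltration S M) (d : ℤ) (hd : ∀ i, d < 𝒻.deg i)
    (hP : P ∈ shiftSet S d) (f : M ⟶ E) (g : E ⟶ P) (h : P ⟶ M⟦(1 : ℤ)⟧)
    (hT : Triangle.mk f g h ∈ distTriang C) : HNFiltration S E where
  m := 𝒻.m + 1
  deg := Fin.snoc 𝒻.deg d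
  deg_strictAnti i j hij := by
    induction j using Fin.lastCases with
    | last =>
      obtain ⟨i, rfl⟩ := Fin.exists_castSucc_eq.mpr hij.ne
      simpa using hd i
    | cast j =>
      obtain ⟨i, rfl⟩ := Fin.exists_castSucc_eq.mpr (hij.trans (Fin.castSucc_lt_last j)).ne
      simpa using 𝒻.deg_strictAnti i j (Fin.castSucc_lt_castSucc_iff.mp hij)
  obj := (Fin.snoc 𝒻.obj E : Fin (𝒻.m + 1 + 1) → C)
  isZero_zero := by
    rw [← Fin.castSucc_zero, Fin.snoc_castSucc]
    exact 𝒻.isZero_zero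
  obj_last := Fin.snoc_last _ _
  factor := (Fin.snoc 𝒻.factor P : Fin (𝒻.m + 1) → C)
  factor_mem i := by
    induction i using Fin.lastCases with
    | last => simpa using hP
    | cast j => simpa using 𝒻.factor_mem j
  ι := Fin.lastCases
    (motive := fun i => (Fin.snoc 𝒻.obj E : Fin (𝒻.m + 1 + 1) → C) i.castSucc ⟶
      (Fin.snoc 𝒻.obj E : Fin (𝒻.m + 1 + 1) → C) i.succ)
    (eqToHom (by simp [𝒻.obj_last]) ≫ f ≫ eqToHom (by simp))
    (fun j => eqToHom (by simp) ≫ 𝒻.ι j ≫ eqToHom (by rw [Fin.succ_castSucc, Fin.snoc_castSucc]))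
  π := Fin.lastCases
    (motive := fun i => (Fin.snoc 𝒻.obj E : Fin (𝒻.m + 1 + 1) → C) i.succ ⟶
      (Fin.snoc 𝒻.factor P : Fin (𝒻.m + 1) → C) i)
    (eqToHom (by simp) ≫ g ≫ eqToHom (by simp))
    (fun j => eqToHom (by rw [Fin.succ_castSucc, Fin.snoc_castSucc]) ≫ 𝒻.π j ≫ eqToHom (by simp))
  δ := Fin.lastCases
    (motive := fun i => (Fin.snoc 𝒻.factor P : Fin (𝒻.m + 1) → C) i ⟶
      ((Fin.snoc 𝒻.obj E : Fin (𝒻.m + 1 + 1) → C) i.castSucc)⟦(1 : ℤ)⟧)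
    (eqToHom (by simp) ≫ h ≫ eqToHom (by simp [𝒻.obj_last]))
    (fun j => eqToHom (by simp) ≫ 𝒻.δ j ≫ eqToHom (by simp))
  distinguished i := by
    induction i using Fin.lastCases with
    | last => simpa only [Fin.lastCases_last] using distTriang_eqToHom _ _ _ hT
    | cast j =>
      simpa only [Fin.lastCases_castSucc] using distTriang_eqToHom _ _ _ (𝒻.distinguished j)

end HNFiltration

lemma HasFiltration.exists_hnFiltration {S : Set C} {lo hi : ℤ} {E : C}
    (hE : HasFiltration S lo hi E) : ∃ 𝒻 : HNFiltration S E, ∀ i, lo ≤ 𝒻.deg i := by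
  induction hE with
  | zero hE => exact ⟨.ofIsZero S hE, fun i => i.elim0⟩
  | @snoc _ _ d _ _ _ _ _ _ _ hT hP hd₁ _ ih =>
    obtain ⟨𝒻, h𝒻⟩ := ih
    refine ⟨𝒻.snoc d (fun i => by have := h𝒻 i; omega) hP _ _ _ hT, fun i => ?_⟩
    induction i using Fin.lastCases with
    | last => simpa [HNFiltration.snoc] using hd₁
    | cast j => have := h𝒻 j; simp [HNFiltration.snoc]; omega

namespace IsHeart

variable {H : Set C}

lemma homZero (hH : IsHeart H) {k₁ k₂ : ℤ} (hk : k₂ < k₁) {A B : C}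
    (hA : A ∈ shiftSet H k₁) (hB : B ∈ shiftSet H k₂) : HomZero A B :=
  hH.hom_orth k₁ k₂ hk A B hA hB

lemma homZero_shift_one (hH : IsHeart H) {X Y : C} (hX : X ∈ H) (hY : Y ∈ H) :
    HomZero (X⟦(1 : ℤ)⟧) Y :=
  hH.homZero zero_lt_one (shift_mem_shiftSet hX 1) (mem_shiftSet_zero hY)

lemma homZero_src_of_lt (hH : IsHeart H) {lo hi k : ℤ} {E Q : C} (hE : HasFiltration H lo hi E)
    (hQ : Q ∈ shiftSet H k) (hk : k < lo) : HomZero E Q :=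
  hE.homZero_src fun _ hk' _ _ hP => hH.homZero (by omega) hP hQ

lemma homZero_tgt_of_lt (hH : IsHeart H) {lo hi k : ℤ} {E Q : C} (hE : HasFiltration H lo hi E)
    (hQ : Q ∈ shiftSet H k) (hk : hi < k) : HomZero Q E :=
  hE.homZero_tgt fun _ _ hk' _ hP => hH.homZero (by omega) hQ hP

/-- A bottom factor of degree `lo` that `E` does not map to vanishes. -/
lemma hasFiltration_succ_of_homZero (hH : IsHeart H) {lo hi : ℤ} {E : C}
    (hE : HasFiltration H lo hi E) (h : ∀ Q ∈ shiftSet H lo, HomZero E Q) :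
    HasFiltration H (lo + 1) hi E := by
  cases hE with
  | zero hE => exact .zero hE
  | @snoc _ _ d _ _ P f g _ hM hT hP hd₁ hd₂ =>
    rcases hd₁.lt_or_eq with hlt | rfl
    · exact .snoc hM hT hP hlt hd₂
    · have hPz : IsZero P := isZero₃_of_mor₂_eq_zero hT (h P hP g)
        (hH.homZero_src_of_lt (hM.shift 1) hP (by omega))
      exact hM.of_distTriang_isZero₃ hT hPz

/-- A top factor of degree `hi` that does not map to `E` vanishes. -/
lemma hasFiltration_pred_of_homZero (hH : IsHeart H) {lo hi : ℤ} {E : C}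
    (hE : HasFiltration H lo hi E) (h : ∀ Q ∈ shiftSet H hi, HomZero Q E) :
    HasFiltration H lo (hi - 1) E := by
  induction hE with
  | zero hE => exact .zero hE
  | @snoc _ _ d _ _ P f g _ hM hT hP hd₁ hd₂ ih =>
    rcases hd₂.lt_or_eq with hlt | rfl
    · refine .snoc (ih fun Q hQ => ?_) hT hP hd₁ (by omega)
      exact homZero_obj₂_tgt (inv_rot_of_distTriang _ hT)
        (hH.homZero (by omega) hQ (shift_mem_shiftSet_add hP (-1))) (h Q hQ)
    · have : IsIso g := (Triangle.isZero₁_iff_isIso₂ _ hT).mp (hM.of_lt_isZero (by omega))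
      exact .zero (by rw [IsZero.iff_id_eq_zero, ← IsIso.hom_inv_id g, h P hP (inv g), comp_zero])

lemma hasFiltration_of_homZero (hH : IsHeart H) {lo hi : ℤ} {E : C}
    (hlo : ∀ k < lo, ∀ Q ∈ shiftSet H k, HomZero E Q)
    (hhi : ∀ k, hi < k → ∀ Q ∈ shiftSet H k, HomZero Q E) : HasFiltration H lo hi E := by
  by_cases hE : IsZero E
  · exact .zero hE
  obtain ⟨𝒻⟩ := hH.filt E hE
  obtain ⟨lo₀, hi₀, h₀⟩ := 𝒻.exists_hasFiltration
  have hlo' : HasFiltration H lo (max hi₀ hi) E := by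
    obtain ⟨lo₁, hlo₁, h₁⟩ : ∃ lo₁ ≤ lo, HasFiltration H lo₁ (max hi₀ hi) E :=
      ⟨_, min_le_right lo₀ lo, h₀.mono (min_le_left _ _) (le_max_left _ _)⟩
    induction lo, hlo₁ using Int.leInduction with
    | base => exact h₁
    | succ n hn ih =>
      exact hH.hasFiltration_succ_of_homZero (ih fun k hk => hlo k (by omega)) (hlo n (by omega))
  obtain ⟨hi₁, hhi₁, h₁⟩ : ∃ hi₁ ≥ hi, HasFiltration H lo hi₁ E :=
    ⟨_, le_max_right hi₀ hi, hlo'⟩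
  clear hlo'
  induction hi, hhi₁ using Int.leInductionDown with
  | base => exact h₁
  | pred n hn ih =>
    exact hH.hasFiltration_pred_of_homZero (ih fun k hk => hhi k (by omega)) (hhi n (by omega))

end IsHeart

namespace IsTorsionPair

variable {H T F : Set C}

lemma homZero_shiftSet (htp : IsTorsionPair H T F) {a : ℤ} {A B : C}
    (hA : A ∈ shiftSet T a) (hB : B ∈ shiftSet F a) : HomZero A B := by
  obtain ⟨A₀, hA₀, ⟨eA⟩⟩ := hA
  obtain ⟨B₀, hB₀, ⟨eB⟩⟩ := hB
  exact HomZero.of_iso eA eB (HomZero.shift (htp.hom_zero A₀ hA₀ B₀ hB₀) a)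

lemma exists_distTriang_shiftSet (htp : IsTorsionPair H T F) {d : ℤ} {A : C}
    (hA : A ∈ shiftSet H d) : ∃ (X Y : C) (s : X ⟶ A) (u : A ⟶ Y) (δ : Y ⟶ X⟦(1 : ℤ)⟧),
      X ∈ shiftSet T d ∧ Y ∈ shiftSet F d ∧ Triangle.mk s u δ ∈ distTriang C := by
  obtain ⟨B, hB, ⟨e⟩⟩ := hA
  obtain ⟨X, Y, f, g, h, hX, hY, hT⟩ := htp.decomp B hB
  exact ⟨_, _, _, _, _, shift_mem_shiftSet hX d, shift_mem_shiftSet hY d,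
    distTriang_of_iso₂ (Triangle.shift_distinguished _ hT d) e.symm⟩

lemma mem_torsionFree_of_isZero (hH : IsHeart H) (htp : IsTorsionPair H T F) {W Z : C}
    (hW : W ∈ T) (hZ : IsZero Z) : Z ∈ F := by
  obtain ⟨X, Y, f, g, h, hX, hY, hT⟩ := htp.decomp W (htp.subsetT hW)
  have hY0 : IsZero Y := isZero₃_of_mor₂_eq_zero hT (htp.hom_zero W hW Y hY g)
    (hH.homZero_shift_one (htp.subsetT hX) (htp.subsetF hY))
  exact htp.isoClosedF (hY0.iso hZ) hY

lemma mem_torsion_of_isZero (hH : IsHeart H) (htp : IsTorsionPair H T F) {W Z : C}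
    (hW : W ∈ F) (hZ : IsZero Z) : Z ∈ T := by
  obtain ⟨X, Y, f, g, h, hX, hY, hT⟩ := htp.decomp W (htp.subsetF hW)
  have hX0 : IsZero X := isZero₁_of_mor₁_eq_zero hT (htp.hom_zero X hX W hW f)
    (hH.homZero_shift_one (htp.subsetT hX) (htp.subsetF hY))
  exact htp.isoClosedT (hX0.iso hZ) hX

lemma mem_shiftSet_torsion_of_homZero (hH : IsHeart H) (htp : IsTorsionPair H T F) {a : ℤ}
    {G : C} (hG : G ∈ shiftSet H a) (h : ∀ Q ∈ shiftSet F a, HomZero G Q) :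
    G ∈ shiftSet T a := by
  obtain ⟨B, hB, ⟨e⟩⟩ := hG
  obtain ⟨X, Y, f, g, δ, hX, hY, hT⟩ := htp.decomp B hB
  have hg : g = 0 := ((h _ (shift_mem_shiftSet hY a)).of_iso e.symm (Iso.refl _)).of_shift a g
  have : IsIso f := (Triangle.isZero₃_iff_isIso₁ _ hT).mp (isZero₃_of_mor₂_eq_zero hT hg
    (hH.homZero_shift_one (htp.subsetT hX) (htp.subsetF hY)))
  exact ⟨B, htp.isoClosedT (asIso f) hX, ⟨e⟩⟩

lemma mem_shiftSet_torsionFree_of_homZero (hH : IsHeart H) (htp : IsTorsionPair H T F) {a : ℤ}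
    {G : C} (hG : G ∈ shiftSet H a) (h : ∀ Q ∈ shiftSet T a, HomZero Q G) :
    G ∈ shiftSet F a := by
  obtain ⟨B, hB, ⟨e⟩⟩ := hG
  obtain ⟨X, Y, f, g, δ, hX, hY, hT⟩ := htp.decomp B hB
  have hf : f = 0 := ((h _ (shift_mem_shiftSet hX a)).of_iso (Iso.refl _) e.symm).of_shift a f
  have : IsIso g := (Triangle.isZero₁_iff_isIso₂ _ hT).mp (isZero₁_of_mor₁_eq_zero hT hf
    (hH.homZero_shift_one (htp.subsetT hX) (htp.subsetF hY)))
  exact ⟨B, htp.isoClosedF (asIso g).symm hY, ⟨e⟩⟩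

end IsTorsionPair

section ForwardTilt

open ZeroObject

variable {H T F : Set C}

lemma forwardTilt_isoClosed {X Y : C} (e : X ≅ Y) (hX : X ∈ forwardTilt T F) :
    Y ∈ forwardTilt T F := by
  obtain ⟨A, B, f, g, h, hA, hB, hT⟩ := hX
  exact ⟨A, B, _, _, _, hA, hB, distTriang_of_iso₂ hT e⟩

lemma exists_distTriang_of_mem_shiftSet_forwardTilt {k : ℤ} {X : C}
    (hX : X ∈ shiftSet (forwardTilt T F) k) :
    ∃ (A B : C) (f : A ⟶ X) (g : X ⟶ B) (h : B ⟶ A⟦(1 : ℤ)⟧),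
      A ∈ shiftSet F (k + 1) ∧ B ∈ shiftSet T k ∧ Triangle.mk f g h ∈ distTriang C := by
  obtain ⟨E, ⟨A, B, f, g, h, hA, hB, hT⟩, ⟨e⟩⟩ := hX
  exact ⟨_, _, _, _, _, add_comm 1 k ▸ shift_mem_shiftSet_add hA k, shift_mem_shiftSet hB k,
    distTriang_of_iso₂ (Triangle.shift_distinguished _ hT k) e.symm⟩

lemma mem_shiftSet_forwardTilt_of_distTriang (htp : IsTorsionPair H T F) {k : ℤ} {A X B : C}
    {f : A ⟶ X} {g : X ⟶ B} {h : B ⟶ A⟦(1 : ℤ)⟧} (hT : Triangle.mk f g h ∈ distTriang C)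
    (hA : A ∈ shiftSet F (k + 1)) (hB : B ∈ shiftSet T k) :
    X ∈ shiftSet (forwardTilt T F) k := by
  refine ⟨X⟦-k⟧, ⟨A⟦-k⟧, B⟦-k⟧, _, _, _, ?_, ?_, Triangle.shift_distinguished _ hT (-k)⟩,
    ⟨((shiftFunctorCompIsoId C (-k) k (by omega)).app X).symm⟩⟩
  · simpa using shift_mem_shiftSet_add hA (-k)
  · obtain ⟨B₀, hB₀, ⟨e⟩⟩ := hB
    exact htp.isoClosedT (((shiftFunctor C (-k)).mapIso e ≪≫
      (shiftFunctorCompIsoId C k (-k) (by omega)).app B₀).symm) hB₀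

lemma torsion_subset_forwardTilt (hH : IsHeart H) (htp : IsTorsionPair H T F) :
    T ⊆ forwardTilt T F := fun Z hZ =>
  ⟨0, Z, 0, 𝟙 Z, 0, ⟨0, htp.mem_torsionFree_of_isZero hH hZ (isZero_zero C),
    ⟨(isZero_zero C).iso ((shiftFunctor C (1 : ℤ)).map_isZero (isZero_zero C))⟩⟩,
    hZ, contractible_distinguished₁ Z⟩

lemma shiftSet_torsionFree_subset_forwardTilt (hH : IsHeart H) (htp : IsTorsionPair H T F) :
    shiftSet F 1 ⊆ forwardTilt T F := fun X ⟨W, hW, e⟩ =>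
  ⟨X, 0, 𝟙 X, 0, 0, ⟨W, hW, e⟩, htp.mem_torsion_of_isZero hH hW (isZero_zero C),
    contractible_distinguished X⟩

lemma homZero_tilt_heart (hH : IsHeart H) (htp : IsTorsionPair H T F) {j k : ℤ} {X Q : C}
    (hX : X ∈ shiftSet (forwardTilt T F) k) (hQ : Q ∈ shiftSet H j) (hj : j < k) :
    HomZero X Q := by
  obtain ⟨A, B, f, g, h, hA, hB, hT⟩ := exists_distTriang_of_mem_shiftSet_forwardTilt hX
  exact homZero_obj₂_src hT (hH.homZero (by omega) (shiftSet_mono htp.subsetF _ hA) hQ)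
    (hH.homZero hj (shiftSet_mono htp.subsetT _ hB) hQ)

lemma homZero_tilt_torsionFree (hH : IsHeart H) (htp : IsTorsionPair H T F) {k : ℤ} {X Q : C}
    (hX : X ∈ shiftSet (forwardTilt T F) k) (hQ : Q ∈ shiftSet F k) : HomZero X Q := by
  obtain ⟨A, B, f, g, h, hA, hB, hT⟩ := exists_distTriang_of_mem_shiftSet_forwardTilt hX
  exact homZero_obj₂_src hT
    (hH.homZero (by omega) (shiftSet_mono htp.subsetF _ hA) (shiftSet_mono htp.subsetF _ hQ))
    (htp.homZero_shiftSet hB hQ)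

lemma homZero_heart_tilt (hH : IsHeart H) (htp : IsTorsionPair H T F) {j k : ℤ} {X Q : C}
    (hX : X ∈ shiftSet (forwardTilt T F) k) (hQ : Q ∈ shiftSet H j) (hj : k + 1 < j) :
    HomZero Q X := by
  obtain ⟨A, B, f, g, h, hA, hB, hT⟩ := exists_distTriang_of_mem_shiftSet_forwardTilt hX
  exact homZero_obj₂_tgt hT (hH.homZero hj hQ (shiftSet_mono htp.subsetF _ hA))
    (hH.homZero (by omega) hQ (shiftSet_mono htp.subsetT _ hB))

lemma homZero_torsion_tilt (hH : IsHeart H) (htp : IsTorsionPair H T F) {k : ℤ} {X Q : C}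
    (hX : X ∈ shiftSet (forwardTilt T F) k) (hQ : Q ∈ shiftSet T (k + 1)) : HomZero Q X := by
  obtain ⟨A, B, f, g, h, hA, hB, hT⟩ := exists_distTriang_of_mem_shiftSet_forwardTilt hX
  exact homZero_obj₂_tgt hT (htp.homZero_shiftSet hQ hA)
    (hH.homZero (by omega) (shiftSet_mono htp.subsetT _ hQ) (shiftSet_mono htp.subsetT _ hB))

lemma forwardTilt_homZero (hH : IsHeart H) (htp : IsTorsionPair H T F) {k₁ k₂ : ℤ}
    (hk : k₂ < k₁) {X₁ X₂ : C} (hX₁ : X₁ ∈ shiftSet (forwardTilt T F) k₁)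
    (hX₂ : X₂ ∈ shiftSet (forwardTilt T F) k₂) : HomZero X₁ X₂ := by
  obtain ⟨A, B, f, g, h, hA, hB, hT⟩ := exists_distTriang_of_mem_shiftSet_forwardTilt hX₂
  refine homZero_obj₂_tgt hT ?_ (homZero_tilt_heart hH htp hX₁ (shiftSet_mono htp.subsetT _ hB) hk)
  rcases (show k₂ + 1 < k₁ ∨ k₂ + 1 = k₁ by omega) with hk' | rfl
  · exact homZero_tilt_heart hH htp hX₁ (shiftSet_mono htp.subsetF _ hA) hk'
  · exact homZero_tilt_torsionFree hH htp hX₁ hA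

lemma mem_shiftSet_torsion_of_distTriang (hH : IsHeart H) (htp : IsTorsionPair H T F)
    {d hi : ℤ} {N M P : C} {j : N ⟶ M} {π : M ⟶ P} {δ : P ⟶ N⟦(1 : ℤ)⟧}
    (hN : HasFiltration H (d + 1) hi N) (hT : Triangle.mk j π δ ∈ distTriang C)
    (hP : P ∈ shiftSet H d) (hF : ∀ Q ∈ shiftSet F d, HomZero M Q) : P ∈ shiftSet T d :=
  htp.mem_shiftSet_torsion_of_homZero hH hP fun Q hQ φ => by
    obtain ⟨ω, rfl⟩ := Triangle.yoneda_exact₃ _ hT φ (hF Q hQ _)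
    rw [hH.homZero_src_of_lt (hN.shift 1) (shiftSet_mono htp.subsetF _ hQ) (by omega) ω]
    exact comp_zero

lemma isZero_or_mem_shiftSet_forwardTilt (hH : IsHeart H) (htp : IsTorsionPair H T F) {a : ℤ}
    {V : C} (hlo : ∀ k < a, ∀ Q ∈ shiftSet H k, HomZero V Q)
    (hF : ∀ Q ∈ shiftSet F a, HomZero V Q)
    (hhi : ∀ k, a + 1 < k → ∀ Q ∈ shiftSet H k, HomZero Q V)
    (hTor : ∀ Q ∈ shiftSet T (a + 1), HomZero Q V) :
    IsZero V ∨ V ∈ shiftSet (forwardTilt T F) a := by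
  cases hH.hasFiltration_of_homZero hlo hhi with
  | zero hV => exact Or.inl hV
  | @snoc _ _ d V₀ _ P ι π δ hV₀ hT hP hd₁ hd₂ =>
    rcases (show d = a ∨ d = a + 1 by omega) with rfl | rfl
    · have hPT := mem_shiftSet_torsion_of_distTriang hH htp hV₀ hT hP hF
      rcases hV₀.isZero_or_mem with hV₀ | hV₀
      · have : IsIso π := (Triangle.isZero₁_iff_isIso₂ _ hT).mp hV₀
        exact Or.inr (mem_shiftSet_of_iso (asIso π).symm
          (shiftSet_mono (torsion_subset_forwardTilt hH htp) _ hPT))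
      · refine Or.inr (mem_shiftSet_forwardTilt_of_distTriang htp hT
          (htp.mem_shiftSet_torsionFree_of_homZero hH hV₀ fun Q hQ ξ => ?_) hPT)
        obtain ⟨ζ, rfl⟩ := Triangle.coyoneda_exact₂ _ (inv_rot_of_distTriang _ hT) ξ (hTor Q hQ _)
        rw [hH.homZero (by omega) (shiftSet_mono htp.subsetT _ hQ)
          (shift_mem_shiftSet_add hP (-1)) ζ]
        exact zero_comp
    · have : IsIso π := (Triangle.isZero₁_iff_isIso₂ _ hT).mp (hV₀.of_lt_isZero (by omega))
      have hPF : P ∈ shiftSet F (1 + a) := add_comm a 1 ▸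
        htp.mem_shiftSet_torsionFree_of_homZero hH hP fun Q hQ =>
          (hTor Q hQ).of_iso (Iso.refl _) (asIso π).symm
      refine Or.inr (mem_shiftSet_of_iso (asIso π).symm
        (shiftSet_mono (shiftSet_torsionFree_subset_forwardTilt hH htp) a ?_))
      rwa [shiftSet_shiftSet]

lemma exists_distTriang_torsionFree_quotient (hH : IsHeart H) (htp : IsTorsionPair H T F)
    {d hi : ℤ} {N E A : C} {ι : N ⟶ E} {π : E ⟶ A} {δ : A ⟶ N⟦(1 : ℤ)⟧}
    (hN : HasFiltration H (d + 1) hi N) (hT : Triangle.mk ι π δ ∈ distTriang C)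
    (hA : A ∈ shiftSet H d) (hd : d ≤ hi) :
    ∃ (M Y : C) (g : M ⟶ E) (q : E ⟶ Y) (δ' : Y ⟶ M⟦(1 : ℤ)⟧),
      Y ∈ shiftSet F d ∧ Triangle.mk g q δ' ∈ distTriang C ∧ HasFiltration H d hi M ∧
      ∀ Q ∈ shiftSet F d, HomZero M Q := by
  obtain ⟨X, Y, s, u, δ', hX, hY, hT'⟩ := htp.exists_distTriang_shiftSet hA
  obtain ⟨M, g, δ'', hT''⟩ := distinguished_cocone_triangle₁ (π ≫ u)
  have hM : ∀ Q, HomZero N Q → HomZero X Q → HomZero M Q := fun Q =>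
    homZero_fiber_comp hT hT' hT''
  refine ⟨M, Y, g, π ≫ u, δ'', hY, hT'', hH.hasFiltration_of_homZero
    (fun k hk Q hQ => hM Q (hH.homZero_src_of_lt hN hQ (by omega))
      (hH.homZero hk (shiftSet_mono htp.subsetT _ hX) hQ))
    (fun k hk Q hQ => homZero_obj₂_tgt (inv_rot_of_distTriang _ hT'')
      (hH.homZero (by omega) hQ (shift_mem_shiftSet_add (shiftSet_mono htp.subsetF _ hY) (-1)))
      (hH.homZero_tgt_of_lt (.snoc hN hT hA le_rfl hd) hQ hk)),
    fun Q hQ => hM Q (hH.homZero_src_of_lt hN (shiftSet_mono htp.subsetF _ hQ) (by omega))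
      (htp.homZero_shiftSet hX hQ)⟩

end ForwardTilt

section Filtration

variable {H T F : Set C}

lemma hasFiltration_forwardTilt_of_distTriang (hH : IsHeart H) (htp : IsTorsionPair H T F)
    {a hi : ℤ} {N M P : C} {j : N ⟶ M} {π : M ⟶ P} {δ : P ⟶ N⟦(1 : ℤ)⟧}
    (hN : HasFiltration (forwardTilt T F) a hi N) (hT : Triangle.mk j π δ ∈ distTriang C)
    (hP : P ∈ shiftSet T a) (ha : a ≤ hi) (hlo : ∀ k < a, ∀ Q ∈ shiftSet H k, HomZero M Q)
    (hF : ∀ Q ∈ shiftSet F a, HomZero M Q) : HasFiltration (forwardTilt T F) a hi M := by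
  have hP' := shiftSet_mono (torsion_subset_forwardTilt hH htp) a hP
  cases hN with
  | zero hN => exact .snoc (.zero hN) hT hP' le_rfl ha
  | @snoc _ _ e N₁ _ W α β γ hN₁ hT₁ hW he₁ he₂ =>
    rcases he₁.lt_or_eq with hlt | rfl
    · exact .snoc (.snoc hN₁ hT₁ hW hlt he₂) hT hP' le_rfl ha
    obtain ⟨V, ε, δV, hT₂⟩ := distinguished_cocone_triangle (α ≫ j)
    have hsrc : ∀ k ≤ a, ∀ Q ∈ shiftSet H k, HomZero M Q → HomZero V Q := fun k hk Q hQ hM =>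
      homZero_obj₂_src (rot_of_distTriang _ hT₂) hM ((hN₁.shift 1).homZero_src
        fun _ hk' _ _ hX => homZero_tilt_heart hH htp hX hQ (by omega))
    have htgt : ∀ Q, HomZero Q W → HomZero Q P → HomZero Q V := fun Q =>
      homZero_cofiber_comp hT₁ hT hT₂
    rcases isZero_or_mem_shiftSet_forwardTilt hH htp (V := V)
        (fun k hk Q hQ => hsrc k hk.le Q hQ (hlo k hk Q hQ))
        (fun Q hQ => hsrc a le_rfl Q (shiftSet_mono htp.subsetF _ hQ) (hF Q hQ))
        (fun k hk Q hQ => htgt Q (homZero_heart_tilt hH htp hW hQ hk)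
          (hH.homZero (by omega) hQ (shiftSet_mono htp.subsetT _ hP)))
        (fun Q hQ => htgt Q (homZero_torsion_tilt hH htp hW hQ)
          (hH.homZero (by omega) (shiftSet_mono htp.subsetT _ hQ) (shiftSet_mono htp.subsetT _ hP)))
        with hV | hV
    · exact (hN₁.of_distTriang_isZero₃ hT₂ hV).mono (by omega) le_rfl
    · exact .snoc hN₁ hT₂ hV le_rfl ha

lemma hasFiltration_forwardTilt_of_homZero (hH : IsHeart H) (htp : IsTorsionPair H T F)
    {a hi : ℤ}
    (ih : ∀ E, HasFiltration H (a + 1) hi E → HasFiltration (forwardTilt T F) a hi E) {M : C}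
    (hM : HasFiltration H a hi M) (hF : ∀ Q ∈ shiftSet F a, HomZero M Q) :
    HasFiltration (forwardTilt T F) a hi M := by
  cases hM with
  | zero hM => exact .zero hM
  | @snoc _ _ d N _ P j π δ hN hT hP hd₁ hd₂ =>
    rcases hd₁.lt_or_eq with hlt | rfl
    · exact ih _ (.snoc hN hT hP hlt hd₂)
    · exact hasFiltration_forwardTilt_of_distTriang hH htp (ih _ hN) hT
        (mem_shiftSet_torsion_of_distTriang hH htp hN hT hP hF) hd₂
        (fun k hk Q hQ => hH.homZero_src_of_lt (.snoc hN hT hP le_rfl hd₂) hQ hk) hF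

lemma hasFiltration_forwardTilt (hH : IsHeart H) (htp : IsTorsionPair H T F) {a hi : ℤ}
    {E : C} (hE : HasFiltration H a hi E) : HasFiltration (forwardTilt T F) (a - 1) hi E := by
  obtain ⟨n, hn⟩ : ∃ n : ℕ, hi - a < n := ⟨(hi - a + 1).toNat, by omega⟩
  induction n generalizing a E with
  | zero => exact .zero (hE.of_lt_isZero (by omega))
  | succ n ih =>
    cases hE with
    | zero hE => exact .zero hE
    | @snoc _ _ d N _ A ι π δ hN hT hA hd₁ hd₂ =>
      obtain ⟨M, Y, g, q, δ', hY, hT', hM, hMF⟩ :=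
        exists_distTriang_torsionFree_quotient hH htp hN hT hA hd₂
      have hM' := hasFiltration_forwardTilt_of_homZero hH htp
        (fun E hE => by simpa using ih hE (by omega)) hM hMF
      have hY' : Y ∈ shiftSet (forwardTilt T F) (d - 1) := by
        refine shiftSet_mono (shiftSet_torsionFree_subset_forwardTilt hH htp) _ ?_
        rwa [shiftSet_shiftSet, add_sub_cancel]
      exact .snoc (by rwa [sub_add_cancel]) hT' hY' (by omega) (by omega)

end Filtration

section Tilting

variable {H T F : Set C}

lemma isHeart_forwardTilt (hH : IsHeart H) (htp : IsTorsionPair H T F) :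
    IsHeart (forwardTilt T F) where
  isoClosed _ _ e hX := forwardTilt_isoClosed e hX
  hom_orth _ _ hk _ _ hX₁ hX₂ := forwardTilt_homZero hH htp hk hX₁ hX₂
  filt E hE := by
    obtain ⟨𝒻⟩ := hH.filt E hE
    obtain ⟨lo, hi, h⟩ := 𝒻.exists_hasFiltration
    obtain ⟨𝒢, -⟩ := (hasFiltration_forwardTilt hH htp h).exists_hnFiltration
    exact ⟨𝒢⟩

lemma isTorsionPair_forwardTilt (hH : IsHeart H) (htp : IsTorsionPair H T F) :
    IsTorsionPair (forwardTilt T F) (shiftSet F 1) T where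
  isoClosedT _ _ e hX := mem_shiftSet_of_iso e hX
  isoClosedF := htp.isoClosedT
  subsetT := shiftSet_torsionFree_subset_forwardTilt hH htp
  subsetF := torsion_subset_forwardTilt hH htp
  hom_zero _ hX _ hY := hH.homZero zero_lt_one (shiftSet_mono htp.subsetF 1 hX)
    (mem_shiftSet_zero (htp.subsetT hY))
  decomp _ hE := hE

lemma IsHeart.shiftSet (hH : IsHeart H) (n : ℤ) : IsHeart (shiftSet H n) where
  isoClosed _ _ e hX := mem_shiftSet_of_iso e hX
  hom_orth k₁ k₂ hk A₁ A₂ hA₁ hA₂ := by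
    rw [shiftSet_shiftSet] at hA₁ hA₂
    exact hH.hom_orth _ _ (by omega) A₁ A₂ hA₁ hA₂
  filt E hE := by
    obtain ⟨𝒻⟩ := hH.filt E hE
    obtain ⟨lo, hi, h⟩ := 𝒻.exists_hasFiltration
    obtain ⟨𝒢, -⟩ := (h.to_shiftSet n).exists_hnFiltration
    exact ⟨𝒢⟩

lemma IsTorsionPair.shiftSet (htp : IsTorsionPair H T F) (n : ℤ) :
    IsTorsionPair (shiftSet H n) (shiftSet T n) (shiftSet F n) where
  isoClosedT _ _ e hX := mem_shiftSet_of_iso e hX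
  isoClosedF _ _ e hX := mem_shiftSet_of_iso e hX
  subsetT := shiftSet_mono htp.subsetT n
  subsetF := shiftSet_mono htp.subsetF n
  hom_zero _ hX _ hY := htp.homZero_shiftSet hX hY
  decomp _ hE := htp.exists_distTriang_shiftSet hE

lemma forwardTilt_shiftSet_neg_one (htp : IsTorsionPair H T F) :
    forwardTilt (shiftSet T (-1)) (shiftSet F (-1)) = backwardTilt T F := by
  rw [forwardTilt, backwardTilt, shiftSet_of_add_eq_zero htp.isoClosedF (by norm_num)]

end Tilting

/-- Happel–Reiten–Smalø tilting: for any torsion pair `⟨T, F⟩` in a heart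
`H`, the forward tilt `H♯` is again a heart, with torsion pair `⟨F[1], T⟩`, and the
backward tilt `H♭` is again a heart, with torsion pair `⟨F, T[-1]⟩`. -/
theorem statement_7 (H T F : Set C) (hH : IsHeart H) (htp : IsTorsionPair H T F) :
    IsHeart (forwardTilt T F) ∧ IsTorsionPair (forwardTilt T F) (shiftSet F 1) T ∧
    IsHeart (backwardTilt T F) ∧ IsTorsionPair (backwardTilt T F) F (shiftSet T (-1)) := by
  have hH' := hH.shiftSet (-1)
  have htp' := htp.shiftSet (-1)
  refine ⟨isHeart_forwardTilt hH htp, isTorsionPair_forwardTilt hH htp, ?_, ?_⟩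
  · simpa [forwardTilt_shiftSet_neg_one htp] using isHeart_forwardTilt hH' htp'
  · simpa [forwardTilt_shiftSet_neg_one htp,
      shiftSet_of_add_eq_zero htp.isoClosedF (neg_add_cancel 1)]
      using isTorsionPair_forwardTilt hH' htp'
end

section
/- Let A be an abelian length category (every object has a finite composition series) with only finitely many simple objects up to isomorphism. Let Z be an assignment of a complex number Z(M) to each object M of A which is additive on short exact sequences (Z(E) = Z(A) + Z(B) whenever 0 → A → E → B → 0 is exact) and satisfies Z(S) ∈ ℍ = {r e^{iπθ} : r ∈ ℝ_{>0}, 0 < θ ≤ 1} for every simple object S. Then: (i) Z(M) ∈ ℍ for every nonzero object M, so Z is a stability function on A; and (ii) Z satisfies the HN-property: every nonzero object M admits a filtration 0 = M_0 ⊂ M_1 ⊂ ⋯ ⊂ M_k = M by subobjects whose successive quotients L_i = M_i/M_{i-1} are Z-semistable with strictly decreasing phases φ(L_1) > φ(L_2) > ⋯ > φ(L_k). -/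
open CategoryTheory CategoryTheory.Limits

/-- The semi-closed upper half-plane `ℍ = {r e^{iπθ} : r > 0, 0 < θ ≤ 1}`. -/
def upperHalfPlaneH : Set ℂ :=
  {z | ∃ r θ : ℝ, 0 < r ∧ 0 < θ ∧ θ ≤ 1 ∧
    z = (r : ℂ) * Complex.exp (θ * Real.pi * Complex.I)}

/-- The phase of a complex number: for `z = r e^{iπθ} ∈ ℍ` with `0 < θ ≤ 1` this is `θ`. -/
noncomputable def phase (z : ℂ) : ℝ := z.arg / Real.pi

variable {A : Type*} [Category A] [Abelian A]

/-- An object `M` is semistable with respect to `Z` if it is nonzero and every nonzero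
subobject `L ⊆ M` satisfies `φ(L) ≤ φ(M)`. -/
def IsSemistable (Z : A → ℂ) (M : A) : Prop :=
  ¬ IsZero M ∧ ∀ (L : A) (f : L ⟶ M), Mono f → ¬ IsZero L → phase (Z L) ≤ phase (Z M)

/-!
Additivity writes `Z M` as the sum of the values of `Z` on the factors of a composition series,
and `ℍ` is closed under addition; this gives (i). The same induction along a composition series
shows that `Z` takes only finitely many values on the subobjects of `M`. As `Z N - Z B ∈ ℍ`
whenever `B < N`, the subobjects of `M` then satisfy the ascending chain condition, and the
HN filtration is built from the bottom up: above `B`, take for `N` a maximal subobject among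
those for which `N / B` has the largest phase. Then `N / B` is semistable, and every later
factor has strictly smaller phase, since otherwise adding it to `N / B` would give a larger
subobject of the same phase.
-/

open ComplexConjugate

lemma mem_upperHalfPlaneH_iff_arg_pos {z : ℂ} : z ∈ upperHalfPlaneH ↔ 0 < z.arg := by
  constructor
  · rintro ⟨r, θ, hr, hθ0, hθ1, rfl⟩
    rw [show (θ : ℂ) * Real.pi * Complex.I = ((θ * Real.pi : ℝ) : ℂ) * Complex.I by
      push_cast; ring, Complex.arg_real_mul _ hr, Complex.arg_exp_mul_I, toIocMod_eq_self _ |>.2]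
    · positivity
    · constructor <;> nlinarith [Real.pi_pos]
  · intro h
    have hz : z ≠ 0 := by rintro rfl; simp at h
    refine ⟨‖z‖, z.arg / Real.pi, norm_pos_iff.mpr hz, div_pos h Real.pi_pos,
      (div_le_one Real.pi_pos).2 (Complex.arg_le_pi z), ?_⟩
    rw [Complex.ofReal_div, div_mul_cancel₀ _ (by exact_mod_cast Real.pi_ne_zero)]
    exact (Complex.norm_mul_exp_arg_mul_I z).symm

lemma mem_upperHalfPlaneH_iff {z : ℂ} :
    z ∈ upperHalfPlaneH ↔ 0 < z.im ∨ z.im = 0 ∧ z.re < 0 := by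
  rw [mem_upperHalfPlaneH_iff_arg_pos, lt_iff_le_and_ne, ne_comm, Ne, Complex.arg_nonneg_iff,
    Complex.arg_eq_zero_iff]
  constructor
  · rintro ⟨h1, h2⟩
    rcases h1.lt_or_eq with h | h
    · exact Or.inl h
    · exact Or.inr ⟨h.symm, by by_contra! h'; exact h2 ⟨h', h.symm⟩⟩
  · rintro (h | ⟨h1, h2⟩)
    · exact ⟨h.le, fun h' => h.ne' h'.2⟩
    · exact ⟨h1.ge, fun h' => by linarith [h'.1]⟩

lemma add_mem_upperHalfPlaneH {z w : ℂ} (hz : z ∈ upperHalfPlaneH)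
    (hw : w ∈ upperHalfPlaneH) : z + w ∈ upperHalfPlaneH := by
  rw [mem_upperHalfPlaneH_iff] at *
  simp only [Complex.add_im, Complex.add_re]
  rcases hz with hz | hz <;> rcases hw with hw | hw
  · exact Or.inl (by linarith)
  · exact Or.inl (by linarith)
  · exact Or.inl (by linarith)
  · exact Or.inr ⟨by linarith, by linarith⟩

lemma zero_notMem_upperHalfPlaneH : (0 : ℂ) ∉ upperHalfPlaneH := by
  simp [mem_upperHalfPlaneH_iff]

lemma im_conj_mul_eq_norm_mul_norm_mul_sin (z w : ℂ) :
    (conj z * w).im = ‖z‖ * ‖w‖ * Real.sin (w.arg - z.arg) := by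
  rcases eq_or_ne z 0 with rfl | hz
  · simp
  rcases eq_or_ne w 0 with rfl | hw
  · simp
  rw [Real.sin_sub, Complex.sin_arg, Complex.sin_arg, Complex.cos_arg hz, Complex.cos_arg hw]
  have : ‖z‖ ≠ 0 := norm_ne_zero_iff.2 hz
  have : ‖w‖ ≠ 0 := norm_ne_zero_iff.2 hw
  simp only [Complex.mul_im, Complex.conj_re, Complex.conj_im]
  field_simp
  ring

lemma phase_le_phase_iff {z w : ℂ} (hz : z ∈ upperHalfPlaneH) (hw : w ∈ upperHalfPlaneH) :
    phase z ≤ phase w ↔ 0 ≤ (conj z * w).im := by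
  have hz0 : z ≠ 0 := by rintro rfl; exact zero_notMem_upperHalfPlaneH hz
  have hw0 : w ≠ 0 := by rintro rfl; exact zero_notMem_upperHalfPlaneH hw
  rw [mem_upperHalfPlaneH_iff_arg_pos] at hz hw
  have := Complex.arg_le_pi z
  have := Complex.arg_le_pi w
  rw [phase, phase, div_le_div_iff_of_pos_right Real.pi_pos,
    im_conj_mul_eq_norm_mul_norm_mul_sin, mul_nonneg_iff_of_pos_left (by positivity)]
  constructor
  · intro h
    exact Real.sin_nonneg_of_nonneg_of_le_pi (by linarith) (by linarith)
  · intro h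
    by_contra! h'
    linarith [Real.sin_neg_of_neg_of_neg_pi_lt (x := w.arg - z.arg) (by linarith) (by linarith)]

lemma phase_le_phase_add {z w : ℂ} (hz : z ∈ upperHalfPlaneH) (hw : w ∈ upperHalfPlaneH)
    (h : phase z ≤ phase w) : phase z ≤ phase (z + w) := by
  rw [phase_le_phase_iff hz (add_mem_upperHalfPlaneH hz hw), mul_add, Complex.add_im,
    Complex.conj_mul', ← Complex.ofReal_pow, Complex.ofReal_im, zero_add]
  exact (phase_le_phase_iff hz hw).1 h

lemma toLex_lt_toLex_of_sub_mem_upperHalfPlaneH {z w : ℂ} (h : w - z ∈ upperHalfPlaneH) :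
    toLex (z.im, -z.re) < toLex (w.im, -w.re) := by
  rw [mem_upperHalfPlaneH_iff, Complex.sub_im, Complex.sub_re] at h
  rw [Prod.Lex.toLex_lt_toLex]
  rcases h with h | ⟨h1, h2⟩
  · exact Or.inl (by linarith)
  · exact Or.inr ⟨by linarith, by linarith⟩

open ZeroObject

lemma shortExact_cokernel_π {X Y : A} (f : X ⟶ Y) [Mono f] :
    (ShortComplex.mk f (cokernel.π f) (cokernel.condition f)).ShortExact :=
  .mk' (ShortComplex.cokernelSequence_exact f) ‹_› (inferInstanceAs (Epi (cokernel.π f)))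

lemma shortExact_kernel_ι {X Y : A} (f : X ⟶ Y) [Epi f] :
    (ShortComplex.mk (kernel.ι f) f (kernel.condition f)).ShortExact :=
  .mk' (ShortComplex.kernelSequence_exact f) (inferInstanceAs (Mono (kernel.ι f))) ‹_›

def IsExactAdditive (Z : A → ℂ) : Prop :=
  ∀ S : ShortComplex A, S.ShortExact → Z S.X₂ = Z S.X₁ + Z S.X₃

namespace IsExactAdditive

variable {Z : A → ℂ} (hZ : IsExactAdditive Z)
include hZ

lemma eq_zero_of_isZero {X : A} (hX : IsZero X) : Z X = 0 := by
  have hS : (ShortComplex.mk (0 : X ⟶ X) (𝟙 X) (by simp)).ShortExact :=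
    .mk' ((ShortComplex.exact_iff_mono _ rfl).2 inferInstance) (hX.mono _) inferInstance
  simpa using hZ _ hS

lemma eq_of_iso {X Y : A} (e : X ≅ Y) : Z X = Z Y := by
  have hS : (ShortComplex.mk (0 : 0 ⟶ X) e.hom (by simp)).ShortExact :=
    .mk' ((ShortComplex.exact_iff_mono _ rfl).2 inferInstance) ((isZero_zero A).mono _)
      inferInstance
  simpa [hZ.eq_zero_of_isZero (isZero_zero A)] using hZ _ hS

lemma apply_cokernel {X Y : A} (f : X ⟶ Y) [Mono f] : Z (cokernel f) = Z Y - Z X := by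
  linear_combination -hZ _ (shortExact_cokernel_π f)

lemma apply_kernel {X Y : A} (f : X ⟶ Y) [Epi f] : Z (kernel f) = Z X - Z Y := by
  linear_combination -hZ _ (shortExact_kernel_ι f)

end IsExactAdditive

structure Filtration (M : A) where
  length : ℕ
  obj : Fin (length + 1) → A
  map : ∀ i : Fin length, obj i.castSucc ⟶ obj i.succ
  factor : Fin length → A
  proj : ∀ i : Fin length, obj i.succ ⟶ factor i
  obj_last : obj (Fin.last length) = M
  shortExact : ∀ i, ∃ w : map i ≫ proj i = 0, (ShortComplex.mk (map i) (proj i) w).ShortExact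

namespace Filtration

def nil (M : A) : Filtration M where
  length := 0
  obj _ := M
  map i := i.elim0
  factor i := i.elim0
  proj i := i.elim0
  obj_last := rfl
  shortExact i := i.elim0

def cons {M X L : A} (F : Filtration M) (f : X ⟶ F.obj 0) (g : F.obj 0 ⟶ L) (w : f ≫ g = 0)
    (hfg : (ShortComplex.mk f g w).ShortExact) : Filtration M where
  length := F.length + 1
  obj := Fin.cons X F.obj
  map := Fin.cases f F.map
  factor := Fin.cons L F.factor
  proj := Fin.cases g F.proj
  obj_last := F.obj_last
  shortExact := Fin.cases ⟨w, hfg⟩ F.shortExact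

lemma induction {M : A} (F : Filtration M) {P : A → Prop} (h₀ : P (F.obj 0))
    (hstep : ∀ i : Fin F.length, P (F.obj i.castSucc) → P (F.obj i.succ)) : P M := by
  have : ∀ i, P (F.obj i) := fun i => Fin.induction h₀ hstep i
  simpa [F.obj_last] using this (Fin.last _)

def IsCompositionSeries {M : A} (F : Filtration M) : Prop :=
  IsZero (F.obj 0) ∧ ∀ i, Simple (F.factor i)

def IsHarderNarasimhan (Z : A → ℂ) {M : A} (F : Filtration M) : Prop :=
  (∀ i, IsSemistable Z (F.factor i)) ∧ StrictAnti fun i => phase (Z (F.factor i))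

namespace IsHarderNarasimhan

variable {Z : A → ℂ} {M : A}

lemma nil : (nil M).IsHarderNarasimhan Z :=
  ⟨fun i => i.elim0, fun i => i.elim0⟩

lemma cons {F : Filtration M} (hF : F.IsHarderNarasimhan Z) {X L : A} {f : X ⟶ F.obj 0}
    {g : F.obj 0 ⟶ L} {w : f ≫ g = 0} (hfg : (ShortComplex.mk f g w).ShortExact)
    (hL : IsSemistable Z L) (hlt : ∀ i, phase (Z (F.factor i)) < phase (Z L)) :
    (F.cons f g w hfg).IsHarderNarasimhan Z := by
  refine ⟨Fin.cases hL hF.1, ?_⟩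
  intro (i : Fin (F.length + 1)) (j : Fin (F.length + 1)) hij
  induction j using Fin.cases with
  | zero => exact absurd hij (Fin.not_lt_zero i)
  | succ j =>
    induction i using Fin.cases with
    | zero => exact hlt j
    | succ i => exact hF.2 (Fin.succ_lt_succ_iff.1 hij)

end IsHarderNarasimhan

end Filtration

namespace IsExactAdditive

variable {Z : A → ℂ} (hZ : IsExactAdditive Z)
include hZ

lemma mem_upperHalfPlaneH_of_isCompositionSeries
    (hsimple : ∀ S : A, Simple S → Z S ∈ upperHalfPlaneH) {M : A} {F : Filtration M}
    (hF : F.IsCompositionSeries) (hM : ¬ IsZero M) : Z M ∈ upperHalfPlaneH := by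
  refine (F.induction (P := fun X => IsZero X ∨ Z X ∈ upperHalfPlaneH)
    (Or.inl hF.1) fun i hi => Or.inr ?_).resolve_left hM
  obtain ⟨w, hS⟩ := F.shortExact i
  have hL := hsimple _ (hF.2 i)
  rw [hZ _ hS]
  rcases hi with hi | hi
  · simpa [hZ.eq_zero_of_isZero hi] using hL
  · exact add_mem_upperHalfPlaneH hi hL

lemma mem_range_subobject_of_mono {X K : A} (k : K ⟶ X) [Mono k] :
    Z K ∈ Set.range fun N : Subobject X => Z N :=
  ⟨Subobject.mk k, hZ.eq_of_iso (Subobject.underlyingIso k)⟩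

lemma finite_range_subobject_of_shortExact {S : ShortComplex A} (hS : S.ShortExact)
    [Simple S.X₃] (h₁ : (Set.range fun N : Subobject S.X₁ => Z N).Finite) :
    (Set.range fun N : Subobject S.X₂ => Z N).Finite := by
  have hker : ∀ {K : A} (k : K ⟶ S.X₂) [Mono k], k ≫ S.g = 0 →
      Z K ∈ Set.range fun N : Subobject S.X₁ => Z N := by
    intro K k _ hk
    have := hS.mono_f
    have : Mono (hS.exact.lift k hk) := mono_of_mono_fac (hS.exact.lift_f k hk)
    exact hZ.mem_range_subobject_of_mono (hS.exact.lift k hk)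
  refine (h₁.union (h₁.image (· + Z S.X₃))).subset ?_
  rintro _ ⟨N, rfl⟩
  by_cases h : N.arrow ≫ S.g = 0
  · exact Or.inl (hker _ h)
  · have := epi_of_nonzero_to_simple h
    refine Or.inr ⟨_, hker (kernel.ι (N.arrow ≫ S.g) ≫ N.arrow) (by simp), ?_⟩
    simp only [hZ.apply_kernel]
    ring

lemma finite_range_subobject_of_isCompositionSeries {M : A} {F : Filtration M}
    (hF : F.IsCompositionSeries) : (Set.range fun N : Subobject M => Z N).Finite := by
  refine F.induction (P := fun X => (Set.range fun N : Subobject X => Z N).Finite)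
    ((Set.finite_singleton 0).subset ?_) fun i hi => ?_
  · rintro _ ⟨N, rfl⟩
    exact hZ.eq_zero_of_isZero (hF.1.of_mono N.arrow)
  · obtain ⟨w, hS⟩ := F.shortExact i
    have := hF.2 i
    exact hZ.finite_range_subobject_of_shortExact hS hi

variable {M : A}

lemma exists_le_of_mono_cokernel {B : Subobject M} {Y L : A} (f : (B : A) ⟶ Y) (ι : Y ⟶ M)
    [Mono ι] (hf : f ≫ ι = B.arrow) (j : L ⟶ cokernel f) [Mono j] :
    ∃ N : Subobject M, B ≤ N ∧ Z N = Z B + Z L := by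
  have : Mono f := mono_of_mono_fac hf
  let h := cokernel.π f ≫ cokernel.π j
  refine ⟨Subobject.mk (kernel.ι h ≫ ι),
    Subobject.le_mk_of_comm (kernel.lift h f (by simp [h])) (by simp [hf]), ?_⟩
  rw [hZ.eq_of_iso (Subobject.underlyingIso _), hZ.apply_kernel, hZ.apply_cokernel,
    hZ.apply_cokernel]
  ring

variable (hpos : ∀ X : A, ¬ IsZero X → Z X ∈ upperHalfPlaneH)
include hpos

lemma sub_mem_upperHalfPlaneH_of_lt {B N : Subobject M} (h : B < N) :
    Z N - Z B ∈ upperHalfPlaneH := by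
  rw [← hZ.apply_cokernel (Subobject.ofLE B N h.le)]
  refine hpos _ fun hzero => h.ne ?_
  have : Epi (Subobject.ofLE B N h.le) :=
    Abelian.epi_of_cokernel_π_eq_zero _ (hzero.eq_of_tgt _ _)
  have := isIso_of_mono_of_epi (Subobject.ofLE B N h.le)
  exact Subobject.eq_of_comm (asIso (Subobject.ofLE B N h.le)) (Subobject.ofLE_arrow _)

lemma wellFoundedGT_subobject (hfin : (Set.range fun N : Subobject M => Z N).Finite) :
    WellFoundedGT (Subobject M) := by
  let key : Subobject M → ℝ ×ₗ ℝ := fun N => toLex ((Z N).im, -(Z N).re)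
  have : Finite (Set.range key) := by
    rw [show key = (fun z : ℂ => toLex (z.im, -z.re)) ∘ fun N : Subobject M => Z N from rfl,
      Set.range_comp]
    exact (hfin.image _).to_subtype
  have hkey : StrictMono (Set.rangeFactorization key) := fun B N h =>
    toLex_lt_toLex_of_sub_mem_upperHalfPlaneH (hZ.sub_mem_upperHalfPlaneH_of_lt hpos h)
  exact hkey.wellFoundedGT

end IsExactAdditive

/-- `N / B` is the maximal destabilising subobject of `M / B`; `Z N - Z B` stands for
`Z (N / B)`. -/
def IsMaxDestabilizing {C : Type*} [Category C] (Z : C → ℂ) {M : C} (B N : Subobject M) :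
    Prop :=
  B < N ∧ (∀ N', B < N' → phase (Z N' - Z B) ≤ phase (Z N - Z B)) ∧
    ∀ N', N < N' → phase (Z N' - Z B) < phase (Z N - Z B)

lemma exists_isMaxDestabilizing {C : Type*} [Category C] {Z : C → ℂ} {M : C}
    [WellFoundedGT (Subobject M)]
    (hfin : (Set.range fun N : Subobject M => Z N).Finite) {B : Subobject M} (hB : B < ⊤) :
    ∃ N, IsMaxDestabilizing Z B N := by
  obtain ⟨_, ⟨N₀, hN₀, rfl⟩, hmax⟩ := Set.exists_max_image
    ((fun N : Subobject M => Z N) '' {N | B < N}) (fun z => phase (z - Z B))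
    (hfin.subset (Set.image_subset_range _ _)) ⟨_, ⟨⊤, hB, rfl⟩⟩
  obtain ⟨N, ⟨hBN, hφ⟩, hNmax⟩ := wellFounded_gt.has_min
    {N | B < N ∧ phase (Z N - Z B) = phase (Z N₀ - Z B)} ⟨N₀, hN₀, rfl⟩
  refine ⟨N, hBN, fun N' h' => hφ ▸ hmax _ ⟨N', h', rfl⟩, fun N' h' => ?_⟩
  refine (hφ ▸ hmax _ ⟨N', hBN.trans h', rfl⟩).lt_of_ne fun heq => ?_
  exact hNmax N' ⟨hBN.trans h', heq.trans hφ⟩ h'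

namespace IsMaxDestabilizing

variable {Z : A → ℂ} (hZ : IsExactAdditive Z)
  (hpos : ∀ X : A, ¬ IsZero X → Z X ∈ upperHalfPlaneH) {M : A}
include hZ hpos

lemma isSemistable_cokernel {B N : Subobject M}
    (hN : IsMaxDestabilizing Z B N) {Y : A} (f : (B : A) ⟶ Y) (ι : Y ⟶ M) [Mono ι]
    (hf : f ≫ ι = B.arrow) (hY : Z Y = Z N) : IsSemistable Z (cokernel f) := by
  have : Mono f := mono_of_mono_fac hf
  have hZf : Z (cokernel f) = Z N - Z B := by rw [hZ.apply_cokernel, hY]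
  have hmem := hZ.sub_mem_upperHalfPlaneH_of_lt hpos hN.1
  refine ⟨fun h0 => zero_notMem_upperHalfPlaneH ?_, fun L j hj hL => ?_⟩
  · rwa [← hZ.eq_zero_of_isZero h0, hZf]
  obtain ⟨N', hBN', hN'⟩ := hZ.exists_le_of_mono_cokernel f ι hf j
  have hlt : B < N' := hBN'.lt_of_ne fun h => by
    subst h
    have hL0 : Z L = 0 := by linear_combination -hN'
    exact zero_notMem_upperHalfPlaneH (hL0 ▸ hpos L hL)
  rw [hZf, show Z L = Z N' - Z B by rw [hN']; ring]
  exact hN.2.1 N' hlt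

lemma phase_sub_lt {B N N₂ : Subobject M} (hN : IsMaxDestabilizing Z B N)
    (h : N < N₂) : phase (Z N₂ - Z N) < phase (Z N - Z B) := by
  by_contra! hle
  have := phase_le_phase_add (hZ.sub_mem_upperHalfPlaneH_of_lt hpos hN.1)
    (hZ.sub_mem_upperHalfPlaneH_of_lt hpos h) hle
  rw [sub_add_sub_cancel'] at this
  exact (hN.2.2 N₂ h).not_ge this

end IsMaxDestabilizing

namespace IsExactAdditive

variable {Z : A → ℂ} (hZ : IsExactAdditive Z)
  (hpos : ∀ X : A, ¬ IsZero X → Z X ∈ upperHalfPlaneH) {M : A}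
include hZ hpos

theorem exists_isHarderNarasimhan_above
    (hfin : (Set.range fun N : Subobject M => Z N).Finite) (B : Subobject M) :
    ∃ F : Filtration M, Nonempty (F.obj 0 ≅ B) ∧ F.IsHarderNarasimhan Z ∧
      ∀ i, ∃ N, B < N ∧ phase (Z (F.factor i)) ≤ phase (Z N - Z B) := by
  have := hZ.wellFoundedGT_subobject hpos hfin
  induction B using WellFoundedGT.induction with | _ B ih =>
  rcases (le_top : B ≤ ⊤).eq_or_lt with rfl | hB
  · exact ⟨.nil M, ⟨(asIso (⊤ : Subobject M).arrow).symm⟩, .nil, fun i => i.elim0⟩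
  obtain ⟨N, hN⟩ := exists_isMaxDestabilizing hfin hB
  obtain ⟨F, ⟨e⟩, hF, hbound⟩ := ih N hN.1
  let f : (B : A) ⟶ F.obj 0 := Subobject.ofLE _ _ hN.1.le ≫ e.inv
  have hf : f ≫ e.hom ≫ N.arrow = B.arrow := by simp [f]
  have hZf : Z (cokernel f) = Z N - Z B := by rw [hZ.apply_cokernel, hZ.eq_of_iso e]
  have hlt : ∀ i, phase (Z (F.factor i)) < phase (Z (cokernel f)) := fun i => by
    obtain ⟨N₂, hN₂, hle⟩ := hbound i
    exact (hle.trans_lt (hN.phase_sub_lt hZ hpos hN₂)).trans_eq (congrArg phase hZf).symm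
  refine ⟨F.cons f (cokernel.π f) _ (shortExact_cokernel_π f), ⟨Iso.refl _⟩,
    hF.cons _ (hN.isSemistable_cokernel hZ hpos f _ hf (hZ.eq_of_iso e)) hlt,
    Fin.cases ⟨N, hN.1, (congrArg phase hZf).le⟩ fun i => ⟨N, hN.1, ?_⟩⟩
  exact ((hlt i).trans_eq (congrArg phase hZf)).le

end IsExactAdditive

theorem statement_12_general
    (hlength : ∀ X : A, ∃ (n : ℕ) (Xo : Fin (n + 1) → A)
      (f : ∀ i : Fin n, Xo i.castSucc ⟶ Xo i.succ) (S : Fin n → A)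
      (g : ∀ i : Fin n, Xo i.succ ⟶ S i),
      IsZero (Xo 0) ∧ Xo (Fin.last n) = X ∧
      (∀ i, ∃ w : f i ≫ g i = 0, (ShortComplex.mk (f i) (g i) w).ShortExact) ∧
      (∀ i, Simple (S i)))
    (Z : A → ℂ)
    (hadd : ∀ (X E Y : A) (f : X ⟶ E) (g : E ⟶ Y) (w : f ≫ g = 0),
      (ShortComplex.mk f g w).ShortExact → Z E = Z X + Z Y)
    (hsimple : ∀ S : A, Simple S → Z S ∈ upperHalfPlaneH) :
    (∀ M : A, ¬ IsZero M → Z M ∈ upperHalfPlaneH) ∧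
    (∀ M : A, ¬ IsZero M → ∃ (k : ℕ) (Mo : Fin (k + 1) → A)
      (f : ∀ i : Fin k, Mo i.castSucc ⟶ Mo i.succ) (L : Fin k → A)
      (g : ∀ i : Fin k, Mo i.succ ⟶ L i),
      IsZero (Mo 0) ∧ Mo (Fin.last k) = M ∧
      (∀ i, ∃ w : f i ≫ g i = 0, (ShortComplex.mk (f i) (g i) w).ShortExact) ∧
      (∀ i, IsSemistable Z (L i)) ∧
      (∀ i j : Fin k, i < j → phase (Z (L j)) < phase (Z (L i)))) := by
  have hZ : IsExactAdditive Z := fun S hS => hadd _ _ _ S.f S.g S.zero hS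
  have hcomp (X : A) : ∃ F : Filtration X, F.IsCompositionSeries := by
    obtain ⟨n, Xo, f, S, g, h₀, hlast, hses, hsimp⟩ := hlength X
    exact ⟨⟨n, Xo, f, S, g, hlast, hses⟩, h₀, hsimp⟩
  have hpos (M : A) (hM : ¬ IsZero M) : Z M ∈ upperHalfPlaneH :=
    hZ.mem_upperHalfPlaneH_of_isCompositionSeries hsimple (hcomp M).choose_spec hM
  refine ⟨hpos, fun M _ => ?_⟩
  obtain ⟨F, ⟨e⟩, hHN, -⟩ := hZ.exists_isHarderNarasimhan_above hpos
    (hZ.finite_range_subobject_of_isCompositionSeries (hcomp M).choose_spec) ⊥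
  exact ⟨F.length, F.obj, F.map, F.factor, F.proj,
    (isZero_zero A).of_iso (e ≪≫ Subobject.botCoeIsoZero), F.obj_last, F.shortExact,
    hHN.1, hHN.2⟩

/-- let `A` be an abelian length category with finitely many simples up to
isomorphism, and let `Z` be additive on short exact sequences with `Z(S) ∈ ℍ` for every
simple `S`. Then (i) `Z(M) ∈ ℍ` for every nonzero `M`, i.e. `Z` is a stability function,
and (ii) `Z` has the HN-property: every nonzero `M` has a filtration by subobjects whose
successive quotients are `Z`-semistable of strictly decreasing phases. -/
theorem statement_12
    (hlength : ∀ X : A, ∃ (n : ℕ) (Xo : Fin (n + 1) → A)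
      (f : ∀ i : Fin n, Xo i.castSucc ⟶ Xo i.succ) (S : Fin n → A)
      (g : ∀ i : Fin n, Xo i.succ ⟶ S i),
      IsZero (Xo 0) ∧ Xo (Fin.last n) = X ∧
      (∀ i, ∃ w : f i ≫ g i = 0, (ShortComplex.mk (f i) (g i) w).ShortExact) ∧
      (∀ i, Simple (S i)))
    (hfin : ∃ (n : ℕ) (S : Fin n → A), (∀ i, Simple (S i)) ∧
      ∀ X : A, Simple X → ∃ i, Nonempty (X ≅ S i))
    (Z : A → ℂ)
    (hadd : ∀ (X E Y : A) (f : X ⟶ E) (g : E ⟶ Y) (w : f ≫ g = 0),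
      (ShortComplex.mk f g w).ShortExact → Z E = Z X + Z Y)
    (hsimple : ∀ S : A, Simple S → Z S ∈ upperHalfPlaneH) :
    (∀ M : A, ¬ IsZero M → Z M ∈ upperHalfPlaneH) ∧
    (∀ M : A, ¬ IsZero M → ∃ (k : ℕ) (Mo : Fin (k + 1) → A)
      (f : ∀ i : Fin k, Mo i.castSucc ⟶ Mo i.succ) (L : Fin k → A)
      (g : ∀ i : Fin k, Mo i.succ ⟶ L i),
      IsZero (Mo 0) ∧ Mo (Fin.last k) = M ∧
      (∀ i, ∃ w : f i ≫ g i = 0, (ShortComplex.mk (f i) (g i) w).ShortExact) ∧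
      (∀ i, IsSemistable Z (L i)) ∧
      (∀ i j : Fin k, i < j → phase (Z (L j)) < phase (Z (L i)))) :=
  statement_12_general hlength Z hadd hsimple
end
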